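/- arXiv:1605.09522 — 11 statements merged into one kernel-verified Lean document; each statement's English description precedes it below -/
import Mathlib

section
/- The squared maximum mean discrepancy of a translation-invariant kernel is the weighted L²(Λ) distance between characteristic functions: ∫∫ k d(P ⊗ P) + ∫∫ k d(Q ⊗ Q) − ∫∫ k d(P ⊗ Q) − ∫∫ k d(Q ⊗ P) = ∫ |φ_P(ω) − φ_Q(ω)|² dΛ(ω). -/
/-!
Since `k x y = φ_Λ (x - y)`, Fubini gives the Fourier pairing `∫ φ_Λ dρ = ∫ φ_ρ dΛ` for finite
measures; applied to the law `ρ` of `x - y` under `μ ⊗ ν`, whose characteristic function is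
`φ_μ · conj φ_ν`, it turns each of the four kernel integrals into `∫ φ_μ · conj φ_ν dΛ`. The four
terms then add up to `∫ |φ_P - φ_Q|² dΛ` by expanding `|a - b|² = (a - b) · conj (a - b)`.
-/

open MeasureTheory Complex ComplexConjugate
open scoped RealInnerProductSpace

namespace MeasureTheory

variable {E : Type*} [NormedAddCommGroup E] [InnerProductSpace ℝ E] [MeasurableSpace E]
  [BorelSpace E] [SecondCountableTopology E]

lemma integrable_charFun (μ Λ : Measure E) [IsFiniteMeasure μ] [IsFiniteMeasure Λ] :
    Integrable (charFun μ) Λ :=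
  (integrable_const (μ.real Set.univ)).mono' stronglyMeasurable_charFun.aestronglyMeasurable
    (ae_of_all _ norm_charFun_le)

lemma integral_charFun_comm (Λ ρ : Measure E) [IsFiniteMeasure Λ] [IsFiniteMeasure ρ] :
    ∫ t, charFun Λ t ∂ρ = ∫ ω, charFun ρ ω ∂Λ := by
  simp_rw [charFun_apply]
  rw [integral_integral_swap]
  · simp_rw [real_inner_comm]
  · exact (integrable_const (1 : ℝ)).mono' (by fun_prop)
      (ae_of_all _ fun _ => by simp [Function.uncurry, norm_exp_ofReal_mul_I])

lemma charFun_map_sub_prod (μ ν : Measure E) [SFinite μ] [SFinite ν] (ω : E) :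
    charFun ((μ.prod ν).map fun p => p.1 - p.2) ω = charFun μ ω * conj (charFun ν ω) := by
  rw [charFun_apply, integral_map (by fun_prop) (by fun_prop), ← charFun_neg, charFun_apply,
    charFun_apply, ← integral_prod_mul]
  simp_rw [inner_sub_left, inner_neg_right, ofReal_sub, ofReal_neg, sub_mul, sub_eq_add_neg,
    neg_mul, exp_add]

lemma integrable_charFun_mul_conj_charFun (Λ μ ν : Measure E) [IsFiniteMeasure Λ]
    [IsFiniteMeasure μ] [IsFiniteMeasure ν] :
    Integrable (fun ω => charFun μ ω * conj (charFun ν ω)) Λ := by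
  simp_rw [← charFun_map_sub_prod]
  exact integrable_charFun _ Λ

lemma integral_charFun_sub_prod (Λ μ ν : Measure E) [IsFiniteMeasure Λ]
    [IsFiniteMeasure μ] [IsFiniteMeasure ν] :
    ∫ p, charFun Λ (p.1 - p.2) ∂(μ.prod ν) = ∫ ω, charFun μ ω * conj (charFun ν ω) ∂Λ := by
  rw [← integral_map (f := charFun Λ) (by fun_prop) (by fun_prop), integral_charFun_comm]
  simp_rw [charFun_map_sub_prod]

lemma ofReal_integral_norm_charFun_sub_sq (Λ μ ν : Measure E) [IsFiniteMeasure Λ]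
    [IsFiniteMeasure μ] [IsFiniteMeasure ν] :
    ((∫ ω, ‖charFun μ ω - charFun ν ω‖ ^ 2 ∂Λ : ℝ) : ℂ)
      = (∫ ω, charFun μ ω * conj (charFun μ ω) ∂Λ) + (∫ ω, charFun ν ω * conj (charFun ν ω) ∂Λ)
        - (∫ ω, charFun μ ω * conj (charFun ν ω) ∂Λ)
        - (∫ ω, charFun ν ω * conj (charFun μ ω) ∂Λ) := by
  have hμμ := integrable_charFun_mul_conj_charFun Λ μ μ
  have hνν := integrable_charFun_mul_conj_charFun Λ ν ν
  have hμν := integrable_charFun_mul_conj_charFun Λ μ ν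
  have hνμ := integrable_charFun_mul_conj_charFun Λ ν μ
  have norm_sub_sq (a b : ℂ) :
      ((‖a - b‖ ^ 2 : ℝ) : ℂ) = a * conj a + b * conj b - a * conj b - b * conj a := by
    rw [ofReal_pow, ← mul_conj', map_sub]
    ring
  rw [← integral_complex_ofReal]
  simp_rw [norm_sub_sq]
  rw [integral_sub, integral_sub, integral_add]
  exacts [hμμ, hνν, hμμ.add hνν, hμν, (hμμ.add hνν).sub hμν, hνμ]

end MeasureTheory

/-- **Squared MMD of a translation-invariant kernel as a weighted `L²(Λ)` distance
between characteristic functions:**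
`∫∫ k d(P⊗P) + ∫∫ k d(Q⊗Q) − ∫∫ k d(P⊗Q) − ∫∫ k d(Q⊗P) = ∫ |φ_P(ω) − φ_Q(ω)|² dΛ(ω)`. -/
theorem sq_mmd_eq_weighted_L2_dist_charFun
    {d : ℕ}
    (Λ : Measure (EuclideanSpace ℝ (Fin d))) [IsFiniteMeasure Λ]
    (P Q : Measure (EuclideanSpace ℝ (Fin d)))
    [IsProbabilityMeasure P] [IsProbabilityMeasure Q]
    (k : EuclideanSpace ℝ (Fin d) → EuclideanSpace ℝ (Fin d) → ℂ)
    (hk : ∀ x y, k x y = ∫ ω, Complex.exp (Complex.I * (⟪ω, x - y⟫ : ℂ)) ∂Λ)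
    (chP chQ : EuclideanSpace ℝ (Fin d) → ℂ)
    (hchP : ∀ ω, chP ω = ∫ x, Complex.exp (Complex.I * (⟪ω, x⟫ : ℂ)) ∂P)
    (hchQ : ∀ ω, chQ ω = ∫ y, Complex.exp (Complex.I * (⟪ω, y⟫ : ℂ)) ∂Q) :
    (∫ p, k p.1 p.2 ∂(P.prod P)) + (∫ p, k p.1 p.2 ∂(Q.prod Q))
        - (∫ p, k p.1 p.2 ∂(P.prod Q)) - (∫ p, k p.1 p.2 ∂(Q.prod P))
      = ((∫ ω, ‖chP ω - chQ ω‖ ^ 2 ∂Λ : ℝ) : ℂ) := by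
  have hk_charFun : k = fun x y => charFun Λ (x - y) := by
    ext x y
    simp_rw [hk, charFun_apply, mul_comm I]
  have hchP_charFun : chP = charFun P := by
    ext ω
    simp_rw [hchP, charFun_apply, mul_comm I, real_inner_comm ω]
  have hchQ_charFun : chQ = charFun Q := by
    ext ω
    simp_rw [hchQ, charFun_apply, mul_comm I, real_inner_comm ω]
  subst hk_charFun hchP_charFun hchQ_charFun
  simp only [integral_charFun_sub_prod, ofReal_integral_norm_charFun_sub_sq]
end

section
/- If the kernel is bounded, sup_{x∈𝒳} k(x, x) ≤ C for some C < ∞, then the maximum mean discrepancy is dominated by the total variation distance: ‖μ_P − μ_Q‖_H ≤ √C · |P − Q|(𝒳), where |P − Q| denotes the total variation measure of the signed measure P − Q. -/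
/-!
Write `P - Q = ν₊ - ν₋` with the Jordan decomposition, so that `P + ν₋ = ν₊ + Q` as finite
measures and hence `μ_P - μ_Q = ∫ φ ∂ν₊ - ∫ φ ∂ν₋`. Each of these integrals has norm at most
`sup ‖φ‖ ≤ √C` times the mass of its measure, and `ν₊(𝒳) + ν₋(𝒳) = |P - Q|(𝒳)`.
-/

open MeasureTheory
open scoped RealInnerProductSpace

namespace MeasureTheory

variable {α E : Type*} [MeasurableSpace α] [NormedAddCommGroup E] [NormedSpace ℝ E]

lemma Measure.add_negPart_eq_posPart_add (μ ν : Measure α) [IsFiniteMeasure μ]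
    [IsFiniteMeasure ν] :
    μ + (μ.toSignedMeasure - ν.toSignedMeasure).toJordanDecomposition.negPart
      = (μ.toSignedMeasure - ν.toSignedMeasure).toJordanDecomposition.posPart + ν := by
  rw [← Measure.toSignedMeasure_eq_toSignedMeasure_iff, Measure.toSignedMeasure_add,
    Measure.toSignedMeasure_add, ← sub_eq_sub_iff_add_eq_add]
  exact (SignedMeasure.toSignedMeasure_toJordanDecomposition _).symm

lemma integral_sub_integral_eq_of_add_eq_add {f : α → E} {μ ν μ' ν' : Measure α}
    (hμ : Integrable f μ) (hν : Integrable f ν) (hμ' : Integrable f μ') (hν' : Integrable f ν')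
    (h : μ + ν' = μ' + ν) :
    ∫ x, f x ∂μ - ∫ x, f x ∂ν = ∫ x, f x ∂μ' - ∫ x, f x ∂ν' := by
  rw [sub_eq_sub_iff_add_eq_add, ← integral_add_measure hμ hν', ← integral_add_measure hμ' hν, h]

lemma norm_integral_sub_integral_le_mul_totalVariation {f : α → E} (hf : StronglyMeasurable f)
    {M : ℝ} (hM : ∀ x, ‖f x‖ ≤ M) (μ ν : Measure α) [IsFiniteMeasure μ] [IsFiniteMeasure ν] :
    ‖∫ x, f x ∂μ - ∫ x, f x ∂ν‖
      ≤ M * ((μ.toSignedMeasure - ν.toSignedMeasure).totalVariation Set.univ).toReal := by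
  set j := (μ.toSignedMeasure - ν.toSignedMeasure).toJordanDecomposition
  have hint (ρ : Measure α) [IsFiniteMeasure ρ] : Integrable f ρ :=
    .of_bound hf.aestronglyMeasurable M (.of_forall hM)
  rw [integral_sub_integral_eq_of_add_eq_add (hint μ) (hint ν) (hint j.posPart) (hint j.negPart)
      (Measure.add_negPart_eq_posPart_add μ ν), ← measureReal_def, SignedMeasure.totalVariation,
    measureReal_add_apply, mul_add]
  exact (norm_sub_le _ _).trans <| add_le_add
    (norm_integral_le_of_norm_le_const (.of_forall hM))
    (norm_integral_le_of_norm_le_const (.of_forall hM))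

end MeasureTheory

theorem mmd_le_sqrt_mul_totalVariation_general
    {𝒳 : Type*} [MeasurableSpace 𝒳]
    {H : Type*} [NormedAddCommGroup H] [InnerProductSpace ℝ H]
    (φ : 𝒳 → H) (hφ : StronglyMeasurable φ)
    (P Q : Measure 𝒳) [IsProbabilityMeasure P] [IsProbabilityMeasure Q]
    (C : ℝ) (hC : ∀ x, ⟪φ x, φ x⟫ ≤ C) :
    ‖(∫ x, φ x ∂P) - ∫ x, φ x ∂Q‖
      ≤ Real.sqrt C *
        ((P.toSignedMeasure - Q.toSignedMeasure).totalVariation Set.univ).toReal := by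
  have hnorm (x : 𝒳) : ‖φ x‖ ≤ Real.sqrt C :=
    Real.le_sqrt_of_sq_le <| real_inner_self_eq_norm_sq (φ x) ▸ hC x
  exact norm_integral_sub_integral_le_mul_totalVariation hφ hnorm P Q

/-- **MMD is dominated by the total variation distance:** if the kernel is bounded,
`k(x,x) = ⟪φ x, φ x⟫ ≤ C` for all `x`, then
`‖μ_P − μ_Q‖_H ≤ √C · |P − Q|(𝒳)`, where `|P − Q|` is the total variation measure
of the signed measure `P − Q`. -/
theorem mmd_le_sqrt_mul_totalVariation
    {𝒳 : Type*} [MeasurableSpace 𝒳]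
    {H : Type*} [NormedAddCommGroup H] [InnerProductSpace ℝ H] [CompleteSpace H]
    (φ : 𝒳 → H) (hφ : StronglyMeasurable φ)
    (P Q : Measure 𝒳) [IsProbabilityMeasure P] [IsProbabilityMeasure Q]
    (C : ℝ) (hC : ∀ x, ⟪φ x, φ x⟫ ≤ C) :
    ‖(∫ x, φ x ∂P) - ∫ x, φ x ∂Q‖
      ≤ Real.sqrt C *
        ((P.toSignedMeasure - Q.toSignedMeasure).totalVariation Set.univ).toReal :=
  mmd_le_sqrt_mul_totalVariation_general φ hφ P Q C hC
end

section
/- Assume the kernel is bounded by 1, i.e. k(x,x) ≤ 1 for all x ∈ 𝒳. Then for every n ≥ 1 and δ ∈ (0,1), with probability at least 1 − δ over an i.i.d. sample X_1, …, X_n from P (the product measure P^{⊗n}), the empirical mean embedding μ̂_P := (1/n) Σ_{i=1}^n φ(X_i) satisfies ‖μ̂_P − μ_P‖_H ≤ 2 √( ∫ k(x,x) dP(x) / n ) + √( 2 log(1/δ) / n ). -/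
/-!
Changing one sample point moves `‖μ̂_P - μ_P‖` by at most `2 / n`, so by McDiarmid's inequality
it exceeds its mean by `√(2 log (1/δ) / n)` with probability at most `δ`. McDiarmid's inequality
is proved by induction on the number of coordinates: for fixed values of the other coordinates,
`f` minus its average over the first coordinate is sub-Gaussian by Hoeffding's lemma, and that
average is again a function with bounded differences of the remaining coordinates.
The mean itself is at most `√(E ‖μ̂_P - μ_P‖²) = √((E k(X, X) - ‖μ_P‖²) / n)`, since the cross
terms of the centred features have mean zero.
-/

open MeasureTheory ProbabilityTheory Real
open scoped NNReal RealInnerProductSpace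

section FinCons

variable {𝒳 : Type*} [MeasurableSpace 𝒳] {n : ℕ}

lemma measurableEmbedding_finCons :
    MeasurableEmbedding fun p : 𝒳 × (Fin n → 𝒳) ↦ (Fin.cons p.1 p.2 : Fin (n + 1) → 𝒳) := by
  convert (MeasurableEquiv.piFinSuccAbove (fun _ : Fin (n + 1) ↦ 𝒳) 0).symm.measurableEmbedding
  ext p : 1
  simp [Fin.insertNthEquiv]

variable (P : Measure 𝒳) [SigmaFinite P]

lemma measurePreserving_finCons :
    MeasurePreserving (fun p : 𝒳 × (Fin n → 𝒳) ↦ (Fin.cons p.1 p.2 : Fin (n + 1) → 𝒳))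
      (P.prod (Measure.pi fun _ ↦ P)) (Measure.pi fun _ ↦ P) := by
  convert (measurePreserving_piFinSuccAbove (fun _ : Fin (n + 1) ↦ P) 0).symm using 1
  ext p : 1
  simp [Fin.insertNthEquiv]

lemma integral_pi_succ {E : Type*} [NormedAddCommGroup E] [NormedSpace ℝ E]
    {f : (Fin (n + 1) → 𝒳) → E} (hf : Integrable f (Measure.pi fun _ ↦ P)) :
    ∫ ω, f ω ∂(Measure.pi fun _ ↦ P) = ∫ t, ∫ x, f (Fin.cons x t) ∂P ∂(Measure.pi fun _ ↦ P) := by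
  have h := measurePreserving_finCons (n := n) P
  rw [← h.integral_comp measurableEmbedding_finCons]
  exact integral_prod_symm _ (h.integrable_comp_of_integrable hf)

end FinCons

section SampleSums

variable {𝒳 H : Type*} [NormedAddCommGroup H] {ψ : 𝒳 → H} {C : ℝ}

lemma norm_sum_apply_le (hC : ∀ x, ‖ψ x‖ ≤ C) {n : ℕ} (ω : Fin n → 𝒳) :
    ‖∑ i, ψ (ω i)‖ ≤ n * C := by
  simpa using norm_sum_le_of_le Finset.univ fun i _ ↦ hC (ω i)

variable [MeasurableSpace 𝒳]

lemma stronglyMeasurable_sum_apply (hψ : StronglyMeasurable ψ) (n : ℕ) :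
    StronglyMeasurable fun ω : Fin n → 𝒳 ↦ ∑ i, ψ (ω i) :=
  Finset.stronglyMeasurable_fun_sum _ fun i _ ↦ hψ.comp_measurable (measurable_pi_apply i)

variable {P : Measure 𝒳} [IsProbabilityMeasure P]

lemma integrable_norm_sum_apply_sq (hψ : StronglyMeasurable ψ) (hC : ∀ x, ‖ψ x‖ ≤ C) (n : ℕ) :
    Integrable (fun ω : Fin n → 𝒳 ↦ ‖∑ i, ψ (ω i)‖ ^ 2) (Measure.pi fun _ ↦ P) :=
  .of_bound ((stronglyMeasurable_sum_apply hψ n).norm.measurable.pow_const 2).aestronglyMeasurable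
    ((n * C) ^ 2) (.of_forall fun ω ↦ by
      rw [norm_pow, norm_norm]; exact pow_le_pow_left₀ (norm_nonneg _) (norm_sum_apply_le hC ω) 2)

variable [InnerProductSpace ℝ H] [CompleteSpace H]

lemma integral_norm_add_sq (hψ : StronglyMeasurable ψ) (hC : ∀ x, ‖ψ x‖ ≤ C) (v : H) :
    ∫ x, ‖ψ x + v‖ ^ 2 ∂P = ∫ x, ‖ψ x‖ ^ 2 ∂P + 2 * ⟪∫ x, ψ x ∂P, v⟫ + ‖v‖ ^ 2 := by
  have hψint : Integrable ψ P := .of_bound hψ.aestronglyMeasurable C (.of_forall hC)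
  have hψ2 : Integrable (fun x ↦ ‖ψ x‖ ^ 2) P :=
    .of_bound (hψ.norm.measurable.pow_const 2).aestronglyMeasurable (C ^ 2) (.of_forall fun x ↦ by
      rw [norm_pow, norm_norm]; exact pow_le_pow_left₀ (norm_nonneg _) (hC x) 2)
  have hinner : ∫ x, ⟪ψ x, v⟫ ∂P = ⟪∫ x, ψ x ∂P, v⟫ := by
    simp_rw [real_inner_comm v]
    exact integral_inner hψint v
  simp_rw [norm_add_sq_real]
  have hlin : Integrable (fun x ↦ 2 * ⟪ψ x, v⟫) P := (hψint.inner_const v).const_mul 2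
  rw [integral_add (hψ2.fun_add hlin) (integrable_const _), integral_add hψ2 hlin,
    integral_const_mul, hinner]
  simp

lemma integral_norm_sum_sq_pi (hψ : StronglyMeasurable ψ) (hC : ∀ x, ‖ψ x‖ ≤ C)
    (h0 : ∫ x, ψ x ∂P = 0) (n : ℕ) :
    ∫ ω, ‖∑ i, ψ (ω i)‖ ^ 2 ∂(Measure.pi fun _ : Fin n ↦ P) = n * ∫ x, ‖ψ x‖ ^ 2 ∂P := by
  induction n with
  | zero => simp
  | succ n ih =>
    rw [integral_pi_succ P (integrable_norm_sum_apply_sq hψ hC _)]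
    simp only [Fin.sum_univ_succ, Fin.cons_zero, Fin.cons_succ, integral_norm_add_sq hψ hC, h0,
      inner_zero_left, mul_zero, add_zero]
    rw [integral_add (integrable_const _) (integrable_norm_sum_apply_sq hψ hC n), ih,
      integral_const]
    simp only [probReal_univ, smul_eq_mul, one_mul, Nat.cast_succ]
    ring

lemma integral_norm_sub_integral_sq (hψ : StronglyMeasurable ψ) (hC : ∀ x, ‖ψ x‖ ≤ C) :
    ∫ x, ‖ψ x - ∫ y, ψ y ∂P‖ ^ 2 ∂P = ∫ x, ‖ψ x‖ ^ 2 ∂P - ‖∫ x, ψ x ∂P‖ ^ 2 := by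
  simp_rw [sub_eq_add_neg, integral_norm_add_sq hψ hC, inner_neg_right, norm_neg,
    real_inner_self_eq_norm_sq]
  ring

end SampleSums

lemma sq_integral_le_integral_sq {Ω : Type*} [MeasurableSpace Ω] {μ : Measure Ω}
    [IsProbabilityMeasure μ] {X : Ω → ℝ} (hX : MemLp X 2 μ) :
    (∫ ω, X ω ∂μ) ^ 2 ≤ ∫ ω, X ω ^ 2 ∂μ := by
  have h := variance_nonneg X μ
  rw [variance_eq_sub hX] at h
  simp only [Pi.pow_apply] at h
  linarith

lemma inv_natCast_smul_sum_sub {ι E : Type*} [Fintype ι] [AddCommGroup E] [Module ℝ E]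
    (hι : Fintype.card ι ≠ 0) (u : ι → E) (v : E) :
    (Fintype.card ι : ℝ)⁻¹ • ∑ i, u i - v = (Fintype.card ι : ℝ)⁻¹ • ∑ i, (u i - v) := by
  rw [Finset.sum_sub_distrib, smul_sub, Finset.sum_const, Finset.card_univ,
    ← Nat.cast_smul_eq_nsmul ℝ, smul_smul, inv_mul_cancel₀ (Nat.cast_ne_zero.2 hι), one_smul]

section EmpiricalMean

variable {𝒳 H : Type*} [MeasurableSpace 𝒳] [NormedAddCommGroup H] [InnerProductSpace ℝ H]
  [CompleteSpace H] {P : Measure 𝒳} [IsProbabilityMeasure P] {φ : 𝒳 → H} {C : ℝ}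

lemma integral_norm_empirical_mean_sub_le (hφ : StronglyMeasurable φ) (hC : ∀ x, ‖φ x‖ ≤ C)
    {n : ℕ} (hn : n ≠ 0) :
    ∫ ω, ‖(n : ℝ)⁻¹ • ∑ i, φ (ω i) - ∫ x, φ x ∂P‖ ∂(Measure.pi fun _ : Fin n ↦ P)
      ≤ √((∫ x, ‖φ x‖ ^ 2 ∂P) / n) := by
  set m := ∫ x, φ x ∂P
  set ψ := fun x ↦ φ x - m
  have hψ : StronglyMeasurable ψ := hφ.sub stronglyMeasurable_const
  have hψC : ∀ x, ‖ψ x‖ ≤ C + ‖m‖ := fun x ↦ (norm_sub_le _ _).trans (by linarith [hC x])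
  have hψ0 : ∫ x, ψ x ∂P = 0 := by
    rw [integral_sub (.of_bound hφ.aestronglyMeasurable C (.of_forall hC)) (integrable_const m)]
    simp [m]
  have hY : ∀ ω : Fin n → 𝒳, ‖(n : ℝ)⁻¹ • ∑ i, φ (ω i) - m‖ = (n : ℝ)⁻¹ * ‖∑ i, ψ (ω i)‖ := by
    intro ω
    have h := inv_natCast_smul_sum_sub (by simpa using hn) (fun i ↦ φ (ω i)) m
    rw [Fintype.card_fin] at h
    rw [h, norm_smul, norm_inv, Real.norm_natCast]
  have hY2 : MemLp (fun ω : Fin n → 𝒳 ↦ (n : ℝ)⁻¹ * ‖∑ i, ψ (ω i)‖) 2 (Measure.pi fun _ ↦ P) :=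
    .of_bound ((stronglyMeasurable_sum_apply hψ n).norm.const_mul _).aestronglyMeasurable
      ((n : ℝ)⁻¹ * (n * (C + ‖m‖))) (.of_forall fun ω ↦ by
        rw [norm_mul, norm_norm, norm_inv, Real.norm_natCast]
        exact mul_le_mul_of_nonneg_left (norm_sum_apply_le hψC ω) (by positivity))
  simp_rw [hY]
  refine Real.le_sqrt_of_sq_le ((sq_integral_le_integral_sq hY2).trans ?_)
  simp_rw [mul_pow]
  rw [integral_const_mul, integral_norm_sum_sq_pi hψ hψC hψ0, integral_norm_sub_integral_sq hφ hC]
  have hn' : (0 : ℝ) < n := by positivity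
  rw [div_eq_inv_mul, inv_pow, sq, mul_inv, mul_assoc, inv_mul_cancel_left₀ hn'.ne']
  gcongr
  exact sub_le_self _ (sq_nonneg _)

end EmpiricalMean

section BoundedDifferences

variable {ι 𝒳 : Type*} [DecidableEq ι]

def HasBoundedDifferences (f : (ι → 𝒳) → ℝ) (c : ℝ) : Prop :=
  ∀ i ω x x', f (Function.update ω i x) - f (Function.update ω i x') ≤ c

variable {f : (ι → 𝒳) → ℝ} {c : ℝ}

lemma HasBoundedDifferences.sub_le [Fintype ι] (hf : HasBoundedDifferences f c) (ω ω' : ι → 𝒳) :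
    f ω - f ω' ≤ Fintype.card ι * c := by
  suffices h : ∀ s : Finset ι, f (s.piecewise ω ω') - f ω' ≤ s.card * c by
    simpa using h Finset.univ
  intro s
  induction s using Finset.induction_on with
  | empty => simp
  | insert i s hi ih =>
    have h := hf i (s.piecewise ω ω') (ω i) (s.piecewise ω ω' i)
    rw [Function.update_eq_self] at h
    rw [Finset.piecewise_insert, Finset.card_insert_of_notMem hi, Nat.cast_succ]
    linarith

lemma HasBoundedDifferences.integrable [Fintype ι] [MeasurableSpace 𝒳] {μ : Measure (ι → 𝒳)}
    [IsProbabilityMeasure μ] (hfm : Measurable f) (hf : HasBoundedDifferences f c) :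
    Integrable f μ := by
  obtain ⟨ω₀⟩ := nonempty_of_isProbabilityMeasure μ
  refine .of_bound hfm.aestronglyMeasurable (|f ω₀| + Fintype.card ι * c) (.of_forall fun ω ↦ ?_)
  have h₁ := hf.sub_le ω ω₀
  have h₂ := hf.sub_le ω₀ ω
  rw [Real.norm_eq_abs, abs_le]
  constructor <;> linarith [le_abs_self (f ω₀), neg_abs_le (f ω₀)]

end BoundedDifferences

lemma exists_forall_mem_Icc_of_sub_le {α : Type*} [Nonempty α] {h : α → ℝ} {c : ℝ}
    (hh : ∀ x x', h x - h x' ≤ c) : ∃ a, ∀ x, h x ∈ Set.Icc a (a + c) := by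
  obtain ⟨x₀⟩ := ‹Nonempty α›
  have hbdd : BddBelow (Set.range h) := ⟨h x₀ - c, by rintro _ ⟨x, rfl⟩; linarith [hh x₀ x]⟩
  refine ⟨⨅ x, h x, fun x ↦ ⟨ciInf_le hbdd x, ?_⟩⟩
  have : h x - c ≤ ⨅ x', h x' := le_ciInf fun x' ↦ by linarith [hh x x']
  linarith

namespace ProbabilityTheory

variable {Ω Ω' : Type*} [MeasurableSpace Ω] [MeasurableSpace Ω']

lemma HasSubgaussianMGF.of_measurePreserving {μ : Measure Ω} {μ' : Measure Ω'} {T : Ω' → Ω}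
    (hT : MeasurePreserving T μ' μ) {X : Ω → ℝ} (hX : Measurable X) {c : ℝ≥0}
    (h : HasSubgaussianMGF (X ∘ T) c μ') : HasSubgaussianMGF X c μ :=
  h.congr_identDistrib ⟨(hX.comp hT.measurable).aemeasurable, hX.aemeasurable,
    by rw [← Measure.map_map hX hT.measurable, hT.map_eq]⟩

lemma hasSubgaussianMGF_add_prod {μ : Measure Ω} {ν : Measure Ω'} [SFinite μ] [SFinite ν]
    {Y : Ω × Ω' → ℝ} {Z : Ω' → ℝ} {cY cZ : ℝ≥0} (hYm : Measurable Y) (hZm : Measurable Z)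
    (hY : ∀ t, HasSubgaussianMGF (fun x ↦ Y (x, t)) cY μ) (hZ : HasSubgaussianMGF Z cZ ν) :
    HasSubgaussianMGF (fun p ↦ Y p + Z p.2) (cY + cZ) (μ.prod ν) := by
  have hfiber : ∀ s t,
      ∫ x, exp (s * (Y (x, t) + Z t)) ∂μ ≤ exp (cY * s ^ 2 / 2) * exp (s * Z t) := by
    intro s t
    simp_rw [mul_add, exp_add]
    rw [integral_mul_const]
    gcongr
    exact (hY t).mgf_le s
  have hint : ∀ s, Integrable (fun p ↦ exp (s * (Y p + Z p.2))) (μ.prod ν) := by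
    intro s
    have hm : Measurable fun p ↦ exp (s * (Y p + Z p.2)) := by fun_prop
    refine (integrable_prod_iff' hm.aestronglyMeasurable).2 ⟨.of_forall fun t ↦ ?_, ?_⟩
    · simp_rw [mul_add, exp_add]
      exact ((hY t).integrable_exp_mul s).mul_const _
    · refine ((hZ.integrable_exp_mul s).const_mul (exp (cY * s ^ 2 / 2))).mono'
        hm.norm.stronglyMeasurable.integral_prod_left'.aestronglyMeasurable (.of_forall fun t ↦ ?_)
      simp only [Real.norm_eq_abs, abs_exp]
      rw [abs_of_nonneg (integral_nonneg fun _ ↦ (exp_pos _).le)]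
      exact hfiber s t
  refine ⟨hint, fun s ↦ ?_⟩
  calc mgf (fun p ↦ Y p + Z p.2) (μ.prod ν) s
      = ∫ t, ∫ x, exp (s * (Y (x, t) + Z t)) ∂μ ∂ν := integral_prod_symm _ (hint s)
    _ ≤ ∫ t, exp (cY * s ^ 2 / 2) * exp (s * Z t) ∂ν :=
        integral_mono_of_nonneg (.of_forall fun _ ↦ integral_nonneg fun _ ↦ (exp_pos _).le)
          ((hZ.integrable_exp_mul s).const_mul _) (.of_forall (hfiber s))
    _ = exp (cY * s ^ 2 / 2) * mgf Z ν s := integral_const_mul _ _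
    _ ≤ exp (cY * s ^ 2 / 2) * exp (cZ * s ^ 2 / 2) := by gcongr; exact hZ.mgf_le s
    _ = exp (↑(cY + cZ) * s ^ 2 / 2) := by rw [← exp_add]; push_cast; ring_nf

end ProbabilityTheory

section McDiarmid

variable {𝒳 : Type*} {n : ℕ} {c : ℝ}

lemma HasBoundedDifferences.sub_le_cons {f : (Fin (n + 1) → 𝒳) → ℝ}
    (hf : HasBoundedDifferences f c) (t : Fin n → 𝒳) (x x' : 𝒳) :
    f (Fin.cons x t) - f (Fin.cons x' t) ≤ c := by
  simpa [Fin.update_cons_zero] using hf 0 (Fin.cons x' t) x x'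

variable [MeasurableSpace 𝒳] (P : Measure 𝒳) [IsProbabilityMeasure P]

lemma HasBoundedDifferences.integral_cons {f : (Fin (n + 1) → 𝒳) → ℝ} (hfm : Measurable f)
    (hf : HasBoundedDifferences f c) :
    HasBoundedDifferences (fun t ↦ ∫ x, f (Fin.cons x t) ∂P) c := by
  have := nonempty_of_isProbabilityMeasure P
  have hint : ∀ t, Integrable (fun x ↦ f (Fin.cons x t)) P := fun t ↦ by
    obtain ⟨a, ha⟩ := exists_forall_mem_Icc_of_sub_le (hf.sub_le_cons t)
    exact .of_mem_Icc a (a + c)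
      (hfm.comp (measurableEmbedding_finCons.measurable.comp measurable_prodMk_right)).aemeasurable
      (.of_forall ha)
  intro i t y y'
  rw [← integral_sub (hint _) (hint _)]
  refine (integral_mono ((hint _).sub' (hint _)) (integrable_const c) fun x ↦ ?_).trans_eq
    (by simp)
  simpa only [Fin.cons_update] using hf i.succ (Fin.cons x t) y y'

theorem HasBoundedDifferences.hasSubgaussianMGF {f : (Fin n → 𝒳) → ℝ} (hfm : Measurable f)
    (hf : HasBoundedDifferences f c) :
    HasSubgaussianMGF (fun ω ↦ f ω - ∫ ω', f ω' ∂(Measure.pi fun _ ↦ P))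
      (n * (‖c‖₊ / 2) ^ 2) (Measure.pi fun _ ↦ P) := by
  induction n with
  | zero =>
    have h : ∀ ω : Fin 0 → 𝒳, f ω - ∫ ω', f ω' ∂(Measure.pi fun _ ↦ P) = 0 := fun ω ↦ by
      simp [Subsingleton.elim _ ω]
    simp [h, HasSubgaussianMGF.fun_zero]
  | succ n ih =>
    have := nonempty_of_isProbabilityMeasure P
    set g := fun t ↦ ∫ x, f (Fin.cons x t) ∂P
    have hFm : Measurable fun p : 𝒳 × (Fin n → 𝒳) ↦ f (Fin.cons p.1 p.2) :=
      hfm.comp measurableEmbedding_finCons.measurable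
    have hgm : Measurable g := hFm.stronglyMeasurable.integral_prod_left'.measurable
    have hfiber : ∀ t, HasSubgaussianMGF (fun x ↦ f (Fin.cons x t) - g t) ((‖c‖₊ / 2) ^ 2) P := by
      intro t
      obtain ⟨a, ha⟩ := exists_forall_mem_Icc_of_sub_le (hf.sub_le_cons t)
      simpa using hasSubgaussianMGF_of_mem_Icc
        (hFm.comp measurable_prodMk_right).aemeasurable (.of_forall ha)
    have hsum := hasSubgaussianMGF_add_prod (hFm.sub (hgm.comp measurable_snd))
      (hgm.sub_const _) hfiber (ih hgm (hf.integral_cons P hfm))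
    rw [← integral_pi_succ P (hf.integrable hfm)] at hsum
    refine .of_measurePreserving (measurePreserving_finCons P) (hfm.sub_const _) ?_
    convert hsum using 1
    · ext p
      simp [g]
    · push_cast
      ring

theorem HasBoundedDifferences.measureReal_ge_le {f : (Fin n → 𝒳) → ℝ} (hfm : Measurable f)
    (hf : HasBoundedDifferences f c) {ε : ℝ} (hε : 0 ≤ ε) :
    (Measure.pi fun _ ↦ P).real {ω | ε ≤ f ω - ∫ ω', f ω' ∂(Measure.pi fun _ ↦ P)}
      ≤ exp (-2 * ε ^ 2 / (n * c ^ 2)) := by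
  refine ((hf.hasSubgaussianMGF P hfm).measure_ge_le hε).trans_eq ?_
  push_cast
  rw [Real.norm_eq_abs, div_pow, sq_abs]
  ring_nf

end McDiarmid

lemma hasBoundedDifferences_norm_smul_sum_sub {𝒳 H : Type*} [NormedAddCommGroup H]
    [NormedSpace ℝ H] {φ : 𝒳 → H} {C : ℝ} (hC : ∀ x, ‖φ x‖ ≤ C) (n : ℕ) (v : H) :
    HasBoundedDifferences (fun ω : Fin n → 𝒳 ↦ ‖(n : ℝ)⁻¹ • ∑ i, φ (ω i) - v‖) (2 * C / n) := by
  intro i ω x x'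
  have hsum : ∀ y, ∑ j, φ (Function.update ω i y j) = φ y + ∑ j ∈ Finset.univ \ {i}, φ (ω j) :=
    fun y ↦ by
      simp_rw [Function.apply_update (fun _ ↦ φ)]
      exact Finset.sum_update_of_mem (Finset.mem_univ i) _ _
  calc ‖(n : ℝ)⁻¹ • ∑ j, φ (Function.update ω i x j) - v‖
        - ‖(n : ℝ)⁻¹ • ∑ j, φ (Function.update ω i x' j) - v‖
      ≤ ‖(n : ℝ)⁻¹ • ∑ j, φ (Function.update ω i x j) - v
          - ((n : ℝ)⁻¹ • ∑ j, φ (Function.update ω i x' j) - v)‖ := norm_sub_norm_le _ _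
    _ = (n : ℝ)⁻¹ * ‖φ x - φ x'‖ := by
      rw [sub_sub_sub_cancel_right, ← smul_sub, hsum, hsum, add_sub_add_right_eq_sub, norm_smul,
        norm_inv, Real.norm_natCast]
    _ ≤ (n : ℝ)⁻¹ * (C + C) := by
      gcongr
      exact (norm_sub_le _ _).trans (add_le_add (hC x) (hC x'))
    _ = 2 * C / n := by ring

lemma ofReal_one_sub_le_measure_compl {Ω : Type*} [MeasurableSpace Ω] {μ : Measure Ω}
    [IsProbabilityMeasure μ] {s : Set Ω} (hs : MeasurableSet s) {δ : ℝ} (h : μ.real s ≤ δ) :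
    ENNReal.ofReal (1 - δ) ≤ μ sᶜ := by
  rw [ENNReal.ofReal_le_iff_le_toReal (measure_ne_top _ _), ← measureReal_def, measureReal_compl hs,
    probReal_univ]
  linarith

theorem empirical_mean_embedding_concentration_general
    {𝒳 : Type*} [MeasurableSpace 𝒳]
    {H : Type*} [NormedAddCommGroup H] [InnerProductSpace ℝ H] [CompleteSpace H]
    (φ : 𝒳 → H) (hφ : StronglyMeasurable φ)
    (P : Measure 𝒳) [IsProbabilityMeasure P]
    (hb : ∀ x, ⟪φ x, φ x⟫ ≤ 1)
    (n : ℕ) (hn : 1 ≤ n) (δ : ℝ) (hδ0 : 0 < δ) :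
    ENNReal.ofReal (1 - δ) ≤
      (Measure.pi fun _ : Fin n => P)
        {ω | ‖((n : ℝ)⁻¹ • ∑ i : Fin n, φ (ω i)) - ∫ x, φ x ∂P‖
              ≤ 2 * Real.sqrt ((∫ x, ⟪φ x, φ x⟫ ∂P) / n)
                + Real.sqrt (2 * Real.log (1 / δ) / n)} := by
  have hn0 : n ≠ 0 := by omega
  have hφ1 : ∀ x, ‖φ x‖ ≤ 1 := fun x ↦ by
    rw [← sq_le_one_iff₀ (norm_nonneg _), ← real_inner_self_eq_norm_sq]
    exact hb x
  set f := fun ω : Fin n → 𝒳 ↦ ‖(n : ℝ)⁻¹ • ∑ i, φ (ω i) - ∫ x, φ x ∂P‖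
  set m := ∫ ω, f ω ∂(Measure.pi fun _ ↦ P)
  set t := √(2 * log (1 / δ) / n)
  have hfm : Measurable f := (((stronglyMeasurable_sum_apply hφ n).const_smul _).sub
    stronglyMeasurable_const).norm.measurable
  have hm : m ≤ √((∫ x, ⟪φ x, φ x⟫ ∂P) / n) := by
    simpa only [real_inner_self_eq_norm_sq] using integral_norm_empirical_mean_sub_le hφ hφ1 hn0
  have htail : (Measure.pi fun _ ↦ P).real {ω | t ≤ f ω - m} ≤ δ := by
    refine ((hasBoundedDifferences_norm_smul_sum_sub hφ1 n _).measureReal_ge_le P hfm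
      (sqrt_nonneg _)).trans ((exp_le_exp.2 ?_).trans_eq (exp_log hδ0))
    have ht : 2 * log (1 / δ) / n ≤ t ^ 2 := sq_sqrt' ▸ le_max_left _ _
    rw [one_div, log_inv, div_le_iff₀ (by positivity)] at ht
    calc -2 * t ^ 2 / (n * (2 * 1 / n) ^ 2) = -(t ^ 2 * n) / 2 := by field_simp
      _ ≤ log δ := by linarith
  refine (ofReal_one_sub_le_measure_compl (measurableSet_le measurable_const
    (hfm.sub measurable_const)) htail).trans (measure_mono fun ω hω ↦ ?_)
  have : f ω - m < t := not_le.1 hω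
  show f ω ≤ _
  linarith [sqrt_nonneg ((∫ x, ⟪φ x, φ x⟫ ∂P) / n)]

/-- **High-probability bound for the empirical mean embedding:** if `k(x,x) ≤ 1`
for all `x`, then for every `n ≥ 1` and `δ ∈ (0,1)`, with probability at least
`1 − δ` over an i.i.d. sample `X₁, …, Xₙ ∼ P`,
`‖μ̂_P − μ_P‖ ≤ 2 √(∫ k(x,x) dP(x) / n) + √(2 log(1/δ) / n)`. -/
theorem empirical_mean_embedding_concentration
    {𝒳 : Type*} [MeasurableSpace 𝒳]
    {H : Type*} [NormedAddCommGroup H] [InnerProductSpace ℝ H] [CompleteSpace H]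
    (φ : 𝒳 → H) (hφ : StronglyMeasurable φ)
    (P : Measure 𝒳) [IsProbabilityMeasure P]
    (hb : ∀ x, ⟪φ x, φ x⟫ ≤ 1)
    (n : ℕ) (hn : 1 ≤ n) (δ : ℝ) (hδ0 : 0 < δ) (hδ1 : δ < 1) :
    ENNReal.ofReal (1 - δ) ≤
      (Measure.pi fun _ : Fin n => P)
        {ω | ‖((n : ℝ)⁻¹ • ∑ i : Fin n, φ (ω i)) - ∫ x, φ x ∂P‖
              ≤ 2 * Real.sqrt ((∫ x, ⟪φ x, φ x⟫ ∂P) / n)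
                + Real.sqrt (2 * Real.log (1 / δ) / n)} :=
  empirical_mean_embedding_concentration_general φ hφ P hb n hn δ hδ0
end

section
/- Empirical conditional mean embedding formula: let v_1, …, v_n ∈ H, w_1, …, w_n ∈ G, λ > 0, and u ∈ H. Define the empirical covariance operator Ĉ_XX : H → H, f ↦ (1/n) Σ_i ⟨v_i, f⟩ v_i, the empirical cross-covariance operator Ĉ_YX : H → G, f ↦ (1/n) Σ_i ⟨v_i, f⟩ w_i, the Gram matrix K ∈ ℝ^{n×n} with K_{ij} = ⟨v_i, v_j⟩, and k_u ∈ ℝ^n with (k_u)_i = ⟨v_i, u⟩. Then K + nλ I_n is invertible, Ĉ_XX + λ·id_H is bijective, and for the unique h ∈ H with (Ĉ_XX + λ·id_H) h = u one has Ĉ_YX h = Σ_{i=1}^n β_i w_i, where β = (K + nλ I_n)^{−1} k_u. -/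
/-!
Write `S f = (⟪vᵢ, f⟫)ᵢ` and `S* a = ∑ aᵢ • vᵢ`, so that `K = S S*` and `Ĉ_XX = n⁻¹ S* S`.
The push-through identity `S (n⁻¹ S* S + λ) = (n⁻¹ K + λ) S` turns `(Ĉ_XX + λ) h = u` into
`(K + nλ) (n⁻¹ S h) = k_u`, hence `β = n⁻¹ S h` and `Ĉ_YX h = n⁻¹ ∑ (S h)ᵢ • wᵢ = ∑ βᵢ • wᵢ`.
`Ĉ_XX + λ` is injective since `⟪(Ĉ_XX + λ) f, f⟫ ≥ λ ‖f‖²`, and `λ⁻¹ (u - n⁻¹ S* γ)` with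
`γ = (n⁻¹ K + λ)⁻¹ k_u` is a preimage of `u`.
-/

open scoped RealInnerProductSpace
open Matrix

section

variable {ι H : Type*} [Fintype ι] [NormedAddCommGroup H] [InnerProductSpace ℝ H]

theorem gram_mulVec_eq_inner_sum (v : ι → H) (a : ι → ℝ) :
    gram ℝ v *ᵥ a = fun i => ⟪v i, ∑ j, a j • v j⟫ := by
  ext i
  simp [mulVec, dotProduct, inner_sum, real_inner_smul_right, mul_comm]

theorem posDef_smul_gram_add_smul_one [DecidableEq ι] (v : ι → H) {s lam : ℝ} (hs : 0 ≤ s)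
    (hlam : 0 < lam) : (s • gram ℝ v + lam • (1 : Matrix ι ι ℝ)).PosDef :=
  PosDef.posSemidef_add ((posSemidef_gram ℝ v).smul hs) (PosDef.one.smul hlam)

/-- For `s = 1 / n` this is `Ĉ_XX + λ • id`. -/
noncomputable def regularizedCov (s lam : ℝ) (v : ι → H) : H →ₗ[ℝ] H :=
  s • ∑ i, (innerₛₗ ℝ (v i)).smulRight (v i) + lam • LinearMap.id

variable {s lam : ℝ} {v : ι → H}

theorem coe_regularizedCov :
    ⇑(regularizedCov s lam v) = fun f => s • ∑ i, ⟪v i, f⟫ • v i + lam • f := by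
  ext f
  simp [regularizedCov]

theorem inner_regularizedCov_self (f : H) :
    ⟪regularizedCov s lam v f, f⟫ = s * ∑ i, ⟪v i, f⟫ ^ 2 + lam * ‖f‖ ^ 2 := by
  simp only [coe_regularizedCov, inner_add_left, real_inner_smul_left, sum_inner,
    real_inner_self_eq_norm_sq, sq]

theorem regularizedCov_injective (hs : 0 ≤ s) (hlam : 0 < lam) :
    Function.Injective (regularizedCov s lam v) := by
  refine (injective_iff_map_eq_zero _).2 fun f hf => ?_
  have hquad := inner_regularizedCov_self (s := s) (lam := lam) (v := v) f
  rw [hf, inner_zero_left] at hquad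
  have hsum : 0 ≤ s * ∑ i, ⟪v i, f⟫ ^ 2 := by positivity
  have hnorm : ‖f‖ ^ 2 = 0 := by nlinarith [sq_nonneg ‖f‖]
  simpa using hnorm

theorem inner_regularizedCov [DecidableEq ι] (f : H) :
    (fun i => ⟪v i, regularizedCov s lam v f⟫)
      = (s • gram ℝ v + lam • (1 : Matrix ι ι ℝ)) *ᵥ fun i => ⟪v i, f⟫ := by
  rw [add_mulVec, smul_mulVec, smul_mulVec, one_mulVec, gram_mulVec_eq_inner_sum]
  ext i
  simp [coe_regularizedCov, inner_add_right, real_inner_smul_right]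

theorem regularizedCov_surjective (hs : 0 ≤ s) (hlam : 0 < lam) :
    Function.Surjective (regularizedCov s lam v) := by
  classical
  intro u
  set A := s • gram ℝ v + lam • (1 : Matrix ι ι ℝ)
  let _ := (posDef_smul_gram_add_smul_one v hs hlam).isUnit.invertible
  set γ := A⁻¹ *ᵥ fun i => ⟪v i, u⟫ with hγ
  have hAγ : A *ᵥ γ = fun i => ⟪v i, u⟫ := by
    rw [hγ, mulVec_mulVec, mul_inv_of_invertible, one_mulVec]
  rw [add_mulVec, smul_mulVec, smul_mulVec, one_mulVec, gram_mulVec_eq_inner_sum] at hAγ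
  set h := lam⁻¹ • (u - s • ∑ j, γ j • v j)
  have hSh : ∀ i, ⟪v i, h⟫ = γ i := by
    intro i
    have hi := congrFun hAγ i
    simp only [Pi.add_apply, Pi.smul_apply, smul_eq_mul] at hi
    rw [real_inner_smul_right, inner_sub_right, real_inner_smul_right, ← hi]
    field_simp
    ring
  refine ⟨h, ?_⟩
  simp only [coe_regularizedCov, hSh, h, smul_smul, mul_inv_cancel₀ hlam.ne', one_smul]
  abel

theorem regularizedCov_bijective (hs : 0 ≤ s) (hlam : 0 < lam) :
    Function.Bijective (regularizedCov s lam v) :=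
  ⟨regularizedCov_injective hs hlam, regularizedCov_surjective hs hlam⟩

end

/-- **Empirical conditional mean embedding formula:** with empirical covariance
operator `Ĉ_XX f = (1/n) Σᵢ ⟪vᵢ, f⟫ vᵢ`, cross-covariance
`Ĉ_YX f = (1/n) Σᵢ ⟪vᵢ, f⟫ wᵢ`, Gram matrix `K_{ij} = ⟪vᵢ, vⱼ⟫` and
`(k_u)ᵢ = ⟪vᵢ, u⟫`, the matrix `K + nλIₙ` is invertible, `Ĉ_XX + λ·id` is
bijective, and for the unique `h` with `(Ĉ_XX + λ·id) h = u` one has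
`Ĉ_YX h = Σᵢ βᵢ wᵢ` with `β = (K + nλIₙ)⁻¹ k_u`. -/
theorem empirical_conditional_mean_embedding
    {H : Type*} [NormedAddCommGroup H] [InnerProductSpace ℝ H]
    {G : Type*} [NormedAddCommGroup G] [InnerProductSpace ℝ G]
    (n : ℕ) (v : Fin n → H) (w : Fin n → G) (lam : ℝ) (hlam : 0 < lam) (u : H) :
    IsUnit ((Matrix.of fun i j => ⟪v i, v j⟫)
        + ((n : ℝ) * lam) • (1 : Matrix (Fin n) (Fin n) ℝ)) ∧
    Function.Bijective (fun f : H => ((n : ℝ)⁻¹ • ∑ i, ⟪v i, f⟫ • v i) + lam • f) ∧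
    ∀ h : H, ((n : ℝ)⁻¹ • ∑ i, ⟪v i, h⟫ • v i) + lam • h = u →
      ((n : ℝ)⁻¹ • ∑ i, ⟪v i, h⟫ • w i)
        = ∑ i, (((Matrix.of fun i j => ⟪v i, v j⟫)
              + ((n : ℝ) * lam) • (1 : Matrix (Fin n) (Fin n) ℝ))⁻¹.mulVec
                (fun i => ⟪v i, u⟫)) i • w i := by
  have hF : Function.Bijective (fun f : H => ((n : ℝ)⁻¹ • ∑ i, ⟪v i, f⟫ • v i) + lam • f) :=
    coe_regularizedCov (v := v) ▸ regularizedCov_bijective (by positivity) hlam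
  obtain rfl | hn := n.eq_zero_or_pos
  · exact ⟨isUnit_of_subsingleton _, hF, fun _ _ => by simp⟩
  have hM : (gram ℝ v + ((n : ℝ) * lam) • 1).PosDef := by
    simpa using posDef_smul_gram_add_smul_one v zero_le_one (by positivity : 0 < (n : ℝ) * lam)
  let _ := hM.isUnit.invertible
  refine ⟨hM.isUnit, hF, fun h hh => ?_⟩
  have hβ : (gram ℝ v + ((n : ℝ) * lam) • 1)⁻¹ *ᵥ (fun i => ⟪v i, u⟫)
      = (n : ℝ)⁻¹ • fun i => ⟪v i, h⟫ := by
    refine inv_mulVec_eq_vec ?_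
    have hSu := inner_regularizedCov (s := (n : ℝ)⁻¹) (lam := lam) (v := v) h
    simp only [coe_regularizedCov, hh] at hSu
    rw [hSu, mulVec_smul, ← smul_mulVec, smul_add, smul_smul,
      inv_mul_cancel_left₀ (by positivity)]
  change _ = ∑ i, ((gram ℝ v + ((n : ℝ) * lam) • 1)⁻¹ *ᵥ (fun i => ⟪v i, u⟫)) i • w i
  rw [hβ, Finset.smul_sum]
  simp only [Pi.smul_apply, smul_eq_mul, mul_smul]
end

section
/- Covariance operator identity for conditional expectations: fix g ∈ G and suppose there exists h ∈ H such that ⟨h, φ(X(ω))⟩ is a version of the conditional expectation E[ ⟨g, ψ(Y)⟩ | σ(X) ](ω), i.e. ⟨h, φ∘X⟩ = E[⟨g, ψ∘Y⟩ | σ(X)] P-almost surely. Then the Bochner integrals in H satisfy ∫ ⟨h, φ(X(ω))⟩ · φ(X(ω)) dP(ω) = ∫ ⟨g, ψ(Y(ω))⟩ · φ(X(ω)) dP(ω); that is, C_XX h = C_XY g, where C_XX f := E[⟨f, φ(X)⟩ φ(X)] and C_XY g := E[⟨g, ψ(Y)⟩ φ(X)]. -/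
open MeasureTheory
open scoped RealInnerProductSpace

/-- **Covariance operator identity for conditional expectations:** if
`⟪h, φ(X·)⟫` is a version of `E[⟪g, ψ(Y)⟫ | σ(X)]`, then
`C_XX h = C_XY g`, i.e.
`∫ ⟪h, φ(X ω)⟫ • φ(X ω) dP(ω) = ∫ ⟪g, ψ(Y ω)⟫ • φ(X ω) dP(ω)`. -/
theorem covariance_operator_identity_condExp
    {Ω : Type*} [MeasurableSpace Ω]
    {𝒳 : Type*} [MeasurableSpace 𝒳] {𝒴 : Type*} [MeasurableSpace 𝒴]
    {H : Type*} [NormedAddCommGroup H] [InnerProductSpace ℝ H] [CompleteSpace H]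
    {G : Type*} [NormedAddCommGroup G] [InnerProductSpace ℝ G] [CompleteSpace G]
    (P : Measure Ω) [IsProbabilityMeasure P]
    (X : Ω → 𝒳) (Y : Ω → 𝒴) (hX : Measurable X) (hY : Measurable Y)
    (φ : 𝒳 → H) (ψ : 𝒴 → G) (hφ : StronglyMeasurable φ) (hψ : StronglyMeasurable ψ)
    (hφ2 : Integrable (fun ω => ‖φ (X ω)‖ ^ 2) P)
    (hψ2 : Integrable (fun ω => ‖ψ (Y ω)‖ ^ 2) P)
    (g : G) (h : H)
    (hcond : (fun ω => ⟪h, φ (X ω)⟫)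
        =ᵐ[P] P[(fun ω => ⟪g, ψ (Y ω)⟫) | MeasurableSpace.comap X inferInstance]) :
    (∫ ω, ⟪h, φ (X ω)⟫ • φ (X ω) ∂P) = ∫ ω, ⟪g, ψ (Y ω)⟫ • φ (X ω) ∂P := by
  have hm : MeasurableSpace.comap X inferInstance ≤ _ := hX.comap_le
  have hφX : StronglyMeasurable[MeasurableSpace.comap X inferInstance] (fun ω => φ (X ω)) :=
    hφ.comp_measurable (comap_measurable X)
  have hψY : StronglyMeasurable (fun ω => ψ (Y ω)) := hψ.comp_measurable hY
  -- integrability of the two vector integrands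
  have hsm1 : AEStronglyMeasurable (fun ω => ⟪h, φ (X ω)⟫ • φ (X ω)) P :=
    (((stronglyMeasurable_const.inner (hφX.mono hm)).smul (hφX.mono hm))).aestronglyMeasurable
  have hsm2 : AEStronglyMeasurable (fun ω => ⟪g, ψ (Y ω)⟫ • φ (X ω)) P :=
    ((stronglyMeasurable_const.inner hψY).smul (hφX.mono hm)).aestronglyMeasurable
  have hint1 : Integrable (fun ω => ⟪h, φ (X ω)⟫ • φ (X ω)) P := by
    refine Integrable.mono' (hφ2.const_mul ‖h‖) hsm1 (ae_of_all _ fun ω => ?_)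
    rw [norm_smul]
    calc ‖⟪h, φ (X ω)⟫‖ * ‖φ (X ω)‖ ≤ (‖h‖ * ‖φ (X ω)‖) * ‖φ (X ω)‖ := by
          gcongr; exact norm_inner_le_norm _ _
      _ = ‖h‖ * ‖φ (X ω)‖ ^ 2 := by ring
  have hint2 : Integrable (fun ω => ⟪g, ψ (Y ω)⟫ • φ (X ω)) P := by
    refine Integrable.mono' (((hφ2.add hψ2).const_mul ‖g‖).const_mul (1/2))
      hsm2 (ae_of_all _ fun ω => ?_)
    rw [norm_smul]
    calc ‖⟪g, ψ (Y ω)⟫‖ * ‖φ (X ω)‖ ≤ (‖g‖ * ‖ψ (Y ω)‖) * ‖φ (X ω)‖ := by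
          gcongr; exact norm_inner_le_norm _ _
      _ = ‖g‖ * (‖ψ (Y ω)‖ * ‖φ (X ω)‖) := by ring
      _ ≤ ‖g‖ * ((‖φ (X ω)‖ ^ 2 + ‖ψ (Y ω)‖ ^ 2) / 2) := by
          gcongr
          nlinarith [sq_nonneg (‖φ (X ω)‖ - ‖ψ (Y ω)‖)]
      _ = 1/2 * (‖g‖ * (‖φ (X ω)‖ ^ 2 + ‖ψ (Y ω)‖ ^ 2)) := by ring
  refine ext_inner_left ℝ fun w => ?_
  have e1 : ⟪w, ∫ ω, ⟪h, φ (X ω)⟫ • φ (X ω) ∂P⟫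
      = ∫ ω, ⟪w, ⟪h, φ (X ω)⟫ • φ (X ω)⟫ ∂P :=
    ((innerSL ℝ w).integral_comp_comm hint1).symm
  have e2 : ⟪w, ∫ ω, ⟪g, ψ (Y ω)⟫ • φ (X ω) ∂P⟫
      = ∫ ω, ⟪w, ⟪g, ψ (Y ω)⟫ • φ (X ω)⟫ ∂P :=
    ((innerSL ℝ w).integral_comp_comm hint2).symm
  rw [e1, e2]
  simp only [real_inner_smul_right]
  -- scalar claim
  set u : Ω → ℝ := fun ω => ⟪g, ψ (Y ω)⟫ with hu_def
  set f : Ω → ℝ := fun ω => ⟪w, φ (X ω)⟫ with hf_def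
  have hf_m : StronglyMeasurable[MeasurableSpace.comap X inferInstance] f := stronglyMeasurable_const.inner hφX
  have hu_int : Integrable u P := by
    refine Integrable.mono' ((hψ2.add (integrable_const 1)).const_mul ‖g‖)
      (stronglyMeasurable_const.inner hψY).aestronglyMeasurable (ae_of_all _ fun ω => ?_)
    calc ‖u ω‖ ≤ ‖g‖ * ‖ψ (Y ω)‖ := norm_inner_le_norm _ _
      _ ≤ ‖g‖ * (‖ψ (Y ω)‖ ^ 2 + 1) := by
          gcongr
          nlinarith [sq_nonneg (‖ψ (Y ω)‖ - 1)]
  have hfu_int : Integrable (f * u) P := by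
    refine Integrable.mono' (((hφ2.add hψ2).const_mul (‖w‖ * ‖g‖)).const_mul (1/2))
      ((hf_m.mono hm).mul (stronglyMeasurable_const.inner hψY)).aestronglyMeasurable
      (ae_of_all _ fun ω => ?_)
    calc ‖(f * u) ω‖ = ‖f ω‖ * ‖u ω‖ := norm_mul _ _
      _ ≤ (‖w‖ * ‖φ (X ω)‖) * (‖g‖ * ‖ψ (Y ω)‖) := by
          gcongr <;> exact norm_inner_le_norm _ _
      _ = (‖w‖ * ‖g‖) * (‖φ (X ω)‖ * ‖ψ (Y ω)‖) := by ring
      _ ≤ (‖w‖ * ‖g‖) * ((‖φ (X ω)‖ ^ 2 + ‖ψ (Y ω)‖ ^ 2) / 2) := by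
          gcongr
          nlinarith [sq_nonneg (‖φ (X ω)‖ - ‖ψ (Y ω)‖)]
      _ = 1/2 * (‖w‖ * ‖g‖ * (‖φ (X ω)‖ ^ 2 + ‖ψ (Y ω)‖ ^ 2)) := by ring
  haveI : SigmaFinite (P.trim hm) := by
    exact (isFiniteMeasure_trim hm).toSigmaFinite
  have hpull : P[f * u | MeasurableSpace.comap X inferInstance] =ᵐ[P] f * P[u | MeasurableSpace.comap X inferInstance] :=
    condExp_mul_of_stronglyMeasurable_left hf_m hfu_int hu_int
  have key : ∫ ω, f ω * u ω ∂P = ∫ ω, f ω * ⟪h, φ (X ω)⟫ ∂P := by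
    have h1 : ∫ ω, f ω * u ω ∂P = ∫ ω, (P[f * u | MeasurableSpace.comap X inferInstance]) ω ∂P :=
      (integral_condExp hm (f := f * u)).symm
    rw [h1]
    refine integral_congr_ae (hpull.trans ?_)
    filter_upwards [hcond] with ω hω
    simp only [Pi.mul_apply, hω]
  calc ∫ ω, ⟪h, φ (X ω)⟫ * ⟪w, φ (X ω)⟫ ∂P
      = ∫ ω, f ω * ⟪h, φ (X ω)⟫ ∂P := by
        refine integral_congr_ae (ae_of_all _ fun ω => ?_); ring
    _ = ∫ ω, f ω * u ω ∂P := key.symm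
    _ = ∫ ω, ⟪g, ψ (Y ω)⟫ * ⟪w, φ (X ω)⟫ ∂P := by
        refine integral_congr_ae (ae_of_all _ fun ω => ?_)
        simp only [hu_def, hf_def]; ring
end

section
/- Kernel sum rule / conditional embedding of a new prior: let ν be a Markov kernel from 𝒳 to 𝒴, P_X and Π probability measures on 𝒳, and define μ_Π := ∫ φ(x) dΠ(x), the marginal embedding μ_Q := ∫ ( ∫ ψ(y) dν(x)(y) ) dΠ(x), the covariance operator C_XX f := ∫ ⟨f, φ(x)⟩ φ(x) dP_X(x), and the cross-covariance C_YX f := ∫ ⟨f, φ(x)⟩ ( ∫ ψ(y) dν(x)(y) ) dP_X(x). Assume: (i) for every g ∈ G there exists e_g ∈ H with ⟨e_g, φ(x)⟩ = ∫ ⟨g, ψ(y)⟩ dν(x)(y) for all x ∈ 𝒳; and (ii) there exists h ∈ H with C_XX h = μ_Π (i.e., μ_Π lies in the range of C_XX). Then μ_Q = C_YX h; in operator form, μ_Q = C_YX C_XX^{−1} μ_Π. -/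
open MeasureTheory
open scoped RealInnerProductSpace

/-- A bounded strongly measurable function is integrable w.r.t. a probability measure. -/
lemma integrable_of_bdd_sm {𝒳 : Type*} [MeasurableSpace 𝒳] {E : Type*}
    [NormedAddCommGroup E] (μ : Measure 𝒳) [IsProbabilityMeasure μ]
    {f : 𝒳 → E} (hf : StronglyMeasurable f) {B : ℝ} (hB : ∀ x, ‖f x‖ ≤ B) :
    Integrable f μ :=
  (integrable_const B).mono' hf.aestronglyMeasurable (Filter.Eventually.of_forall hB)

/-- **Kernel sum rule / conditional embedding of a new prior:** with
`μ_Π = ∫ φ dΠ`, `μ_Q = ∫ (∫ ψ dν(x)) dΠ(x)`, covariance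
`C_XX f = ∫ ⟪f, φ x⟫ • φ x dP_X` and cross-covariance
`C_YX f = ∫ ⟪f, φ x⟫ • (∫ ψ dν(x)) dP_X`, if (i) every `g ∈ G` has an `e_g ∈ H`
with `⟪e_g, φ x⟫ = ∫ ⟪g, ψ y⟫ dν(x)(y)` for all `x`, and (ii) `C_XX h = μ_Π`,
then `μ_Q = C_YX h` (in operator form `μ_Q = C_YX C_XX⁻¹ μ_Π`). -/
theorem kernel_sum_rule
    {𝒳 : Type*} [MeasurableSpace 𝒳] {𝒴 : Type*} [MeasurableSpace 𝒴]
    {H : Type*} [NormedAddCommGroup H] [InnerProductSpace ℝ H] [CompleteSpace H]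
    {G : Type*} [NormedAddCommGroup G] [InnerProductSpace ℝ G] [CompleteSpace G]
    (φ : 𝒳 → H) (ψ : 𝒴 → G) (hφ : StronglyMeasurable φ) (hψ : StronglyMeasurable ψ)
    (hφb : ∃ B, ∀ x, ‖φ x‖ ≤ B) (hψb : ∃ B, ∀ y, ‖ψ y‖ ≤ B)
    (ν : ProbabilityTheory.Kernel 𝒳 𝒴) [ProbabilityTheory.IsMarkovKernel ν]
    (PX Prior : Measure 𝒳) [IsProbabilityMeasure PX] [IsProbabilityMeasure Prior]
    (hbridge : ∀ g : G, ∃ e : H, ∀ x, ⟪e, φ x⟫ = ∫ y, ⟪g, ψ y⟫ ∂(ν x))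
    (h : H) (hh : (∫ x, ⟪h, φ x⟫ • φ x ∂PX) = ∫ x, φ x ∂Prior) :
    (∫ x, (∫ y, ψ y ∂(ν x)) ∂Prior) = ∫ x, ⟪h, φ x⟫ • (∫ y, ψ y ∂(ν x)) ∂PX := by
  obtain ⟨B₀, hB₀⟩ := hφb
  obtain ⟨C₀, hC₀⟩ := hψb
  set B := max B₀ 0 with hBdef
  set C := max C₀ 0 with hCdef
  have hB : ∀ x, ‖φ x‖ ≤ B := fun x => (hB₀ x).trans (le_max_left _ _)
  have hC : ∀ y, ‖ψ y‖ ≤ C := fun y => (hC₀ y).trans (le_max_left _ _)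
  have hBnn : (0:ℝ) ≤ B := le_max_right _ _
  have hCnn : (0:ℝ) ≤ C := le_max_right _ _
  -- measurability of x ↦ ∫ ψ dν(x)
  have hm : StronglyMeasurable fun x => ∫ y, ψ y ∂(ν x) := by
    have : StronglyMeasurable (Function.uncurry fun (_ : 𝒳) (y : 𝒴) => ψ y) :=
      hψ.comp_measurable measurable_snd
    exact this.integral_kernel_prod_right
  -- boundedness of x ↦ ∫ ψ dν(x)
  have hmb : ∀ x, ‖∫ y, ψ y ∂(ν x)‖ ≤ C := by
    intro x
    calc ‖∫ y, ψ y ∂(ν x)‖ ≤ C * ((ν x) Set.univ).toReal :=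
          norm_integral_le_of_norm_le_const (Filter.Eventually.of_forall hC)
      _ = C := by simp
  have hψint : ∀ x, Integrable ψ (ν x) := fun x => integrable_of_bdd_sm (ν x) hψ hC
  -- integrability facts
  have hI1 : Integrable (fun x => ∫ y, ψ y ∂(ν x)) Prior := integrable_of_bdd_sm Prior hm hmb
  have hIφ : Integrable φ Prior := integrable_of_bdd_sm Prior hφ hB
  have hsm_inner : StronglyMeasurable fun x => ⟪h, φ x⟫ :=
    (stronglyMeasurable_const (b := h)).inner hφ
  have hI2 : Integrable (fun x => ⟪h, φ x⟫ • φ x) PX := by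
    refine integrable_of_bdd_sm PX (hsm_inner.smul hφ) (B := ‖h‖ * B * B) fun x => ?_
    rw [norm_smul]
    have h1 : ‖⟪h, φ x⟫‖ ≤ ‖h‖ * B :=
      (abs_real_inner_le_norm h (φ x)).trans
        (mul_le_mul_of_nonneg_left (hB x) (norm_nonneg h))
    exact mul_le_mul h1 (hB x) (norm_nonneg _) (by positivity)
  have hI3 : Integrable (fun x => ⟪h, φ x⟫ • ∫ y, ψ y ∂(ν x)) PX := by
    refine integrable_of_bdd_sm PX (hsm_inner.smul hm) (B := ‖h‖ * B * C) fun x => ?_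
    rw [norm_smul]
    have h1 : ‖⟪h, φ x⟫‖ ≤ ‖h‖ * B :=
      (abs_real_inner_le_norm h (φ x)).trans
        (mul_le_mul_of_nonneg_left (hB x) (norm_nonneg h))
    exact mul_le_mul h1 (hmb x) (norm_nonneg _) (by positivity)
  refine ext_inner_left ℝ fun g => ?_
  obtain ⟨e, he⟩ := hbridge g
  calc ⟪g, ∫ x, ∫ y, ψ y ∂(ν x) ∂Prior⟫
      = ∫ x, ⟪g, ∫ y, ψ y ∂(ν x)⟫ ∂Prior := (integral_inner hI1 g).symm
    _ = ∫ x, ∫ y, ⟪g, ψ y⟫ ∂(ν x) ∂Prior := by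
        refine integral_congr_ae (Filter.Eventually.of_forall fun x => ?_)
        exact (integral_inner (hψint x) g).symm
    _ = ∫ x, ⟪e, φ x⟫ ∂Prior := by
        refine integral_congr_ae (Filter.Eventually.of_forall fun x => ?_)
        exact (he x).symm
    _ = ⟪e, ∫ x, φ x ∂Prior⟫ := integral_inner hIφ e
    _ = ⟪e, ∫ x, ⟪h, φ x⟫ • φ x ∂PX⟫ := by rw [hh]
    _ = ∫ x, ⟪e, ⟪h, φ x⟫ • φ x⟫ ∂PX := (integral_inner hI2 e).symm
    _ = ∫ x, ⟪h, φ x⟫ * ⟪e, φ x⟫ ∂PX := by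
        simp [real_inner_smul_right]
    _ = ∫ x, ⟪h, φ x⟫ * ∫ y, ⟪g, ψ y⟫ ∂(ν x) ∂PX := by
        simp only [he]
    _ = ∫ x, ⟪g, ⟪h, φ x⟫ • ∫ y, ψ y ∂(ν x)⟫ ∂PX := by
        refine integral_congr_ae (Filter.Eventually.of_forall fun x => ?_)
        show ⟪h, φ x⟫ * ∫ y, ⟪g, ψ y⟫ ∂(ν x) = ⟪g, ⟪h, φ x⟫ • ∫ y, ψ y ∂(ν x)⟫
        rw [real_inner_smul_right, integral_inner (hψint x) g]
    _ = ⟪g, ∫ x, ⟪h, φ x⟫ • ∫ y, ψ y ∂(ν x) ∂PX⟫ := integral_inner hI3 g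
end

section
/- Surrogate loss bound for conditional mean embedding: for every measurable map μ : 𝒳 → G with E‖μ(X)‖² < ∞ and every g ∈ G with ‖g‖_G ≤ 1, one has E[ ( E[⟨g, ψ(Y)⟩ | σ(X)] − ⟨g, μ(X)⟩ )² ] ≤ E[ ‖ψ(Y) − μ(X)‖²_G ]. Consequently the natural risk sup_{‖g‖_G ≤ 1} E[(E[⟨g,ψ(Y)⟩|σ(X)] − ⟨g, μ(X)⟩)²] is bounded above by the surrogate risk E‖ψ(Y) − μ(X)‖². -/
/-!
Conditional expectation commutes with subtracting the `σ(X)`-measurable term `⟪g, μ(X)⟫`, so the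
integrand is `(E[⟪g, ψ(Y) - μ(X)⟫ | σ(X)])²`. Conditional Jensen bounds its integral by
`E[⟪g, ψ(Y) - μ(X)⟫²]`, and Cauchy–Schwarz with `‖g‖ ≤ 1` bounds that by `E‖ψ(Y) - μ(X)‖²`.
-/

open MeasureTheory
open scoped RealInnerProductSpace

section
variable {Ω : Type*} {m m₀ : MeasurableSpace Ω} {P : Measure Ω}

theorem integral_sq_condExp_le_integral_sq [IsFiniteMeasure P] (hm : m ≤ m₀) {f : Ω → ℝ}
    (hf : MemLp f 2 P) : ∫ ω, (P[f|m]) ω ^ 2 ∂P ≤ ∫ ω, f ω ^ 2 ∂P := by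
  have hjensen : (fun ω => (P[f|m]) ω ^ 2) ≤ᵐ[P] P[fun ω => f ω ^ 2|m] :=
    even_two.convexOn_pow.map_condExp_le_univ hm (continuous_pow 2).lowerSemicontinuous
      (hf.integrable one_le_two) hf.integrable_sq
  calc ∫ ω, (P[f|m]) ω ^ 2 ∂P ≤ ∫ ω, (P[fun ω => f ω ^ 2|m]) ω ∂P :=
        integral_mono_ae (hf.condExp one_le_two).integrable_sq integrable_condExp hjensen
    _ = ∫ ω, f ω ^ 2 ∂P := integral_condExp hm

theorem condExp_sub_of_stronglyMeasurable_right {E : Type*} [NormedAddCommGroup E]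
    [NormedSpace ℝ E] [CompleteSpace E] (hm : m ≤ m₀) [SigmaFinite (P.trim hm)] {f g : Ω → E}
    (hf : Integrable f P) (hg : StronglyMeasurable[m] g) (hgi : Integrable g P) :
    P[f - g|m] =ᵐ[P] P[f|m] - g := by
  simpa only [condExp_of_stronglyMeasurable hm hg hgi] using condExp_sub hf hgi m

theorem real_inner_sq_le_norm_sq_of_norm_le_one {E : Type*} [NormedAddCommGroup E]
    [InnerProductSpace ℝ E] {g : E} (hg : ‖g‖ ≤ 1) (v : E) : ⟪g, v⟫ ^ 2 ≤ ‖v‖ ^ 2 := by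
  rw [← sq_abs]
  gcongr
  calc |⟪g, v⟫| ≤ ‖g‖ * ‖v‖ := abs_real_inner_le_norm g v
    _ ≤ ‖v‖ := mul_le_of_le_one_left (norm_nonneg v) hg

theorem integral_sq_condExp_inner_sub_le {E : Type*} [NormedAddCommGroup E]
    [InnerProductSpace ℝ E] [IsFiniteMeasure P] (hm : m ≤ m₀) {F H : Ω → E}
    (hF : MemLp F 2 P) (hH : MemLp H 2 P) (hHm : StronglyMeasurable[m] H) {g : E}
    (hg : ‖g‖ ≤ 1) :
    ∫ ω, ((P[fun ω' => ⟪g, F ω'⟫|m]) ω - ⟪g, H ω⟫) ^ 2 ∂P ≤ ∫ ω, ‖F ω - H ω‖ ^ 2 ∂P := by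
  have hFg : MemLp (fun ω => ⟪g, F ω⟫) 2 P := hF.const_inner g
  have hHg : MemLp (fun ω => ⟪g, H ω⟫) 2 P := hH.const_inner g
  have hsub : P[fun ω => ⟪g, F ω - H ω⟫|m] =ᵐ[P]
      fun ω => (P[fun ω' => ⟪g, F ω'⟫|m]) ω - ⟪g, H ω⟫ := by
    simp only [inner_sub_right]
    exact condExp_sub_of_stronglyMeasurable_right hm (hFg.integrable one_le_two)
      ((innerSL ℝ g).continuous.comp_stronglyMeasurable hHm) (hHg.integrable one_le_two)
  calc ∫ ω, ((P[fun ω' => ⟪g, F ω'⟫|m]) ω - ⟪g, H ω⟫) ^ 2 ∂P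
      = ∫ ω, (P[fun ω => ⟪g, F ω - H ω⟫|m]) ω ^ 2 ∂P :=
        integral_congr_ae (hsub.mono fun ω hω => by simp only [hω])
    _ ≤ ∫ ω, ⟪g, F ω - H ω⟫ ^ 2 ∂P :=
        integral_sq_condExp_le_integral_sq hm ((hF.sub hH).const_inner g)
    _ ≤ ∫ ω, ‖F ω - H ω‖ ^ 2 ∂P :=
        integral_mono ((hF.sub hH).const_inner g).integrable_sq
          ((hF.sub hH).integrable_norm_pow two_ne_zero)
          fun ω => real_inner_sq_le_norm_sq_of_norm_le_one hg _

end

theorem conditional_mean_embedding_surrogate_bound_general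
    {Ω : Type*} [MeasurableSpace Ω]
    {𝒳 : Type*} [MeasurableSpace 𝒳] {𝒴 : Type*} [MeasurableSpace 𝒴]
    {G : Type*} [NormedAddCommGroup G] [InnerProductSpace ℝ G]
    (P : Measure Ω) [IsProbabilityMeasure P]
    (X : Ω → 𝒳) (Y : Ω → 𝒴) (hX : Measurable X) (hY : Measurable Y)
    (ψ : 𝒴 → G) (hψ : StronglyMeasurable ψ)
    (hψ2 : Integrable (fun ω => ‖ψ (Y ω)‖ ^ 2) P)
    (μ : 𝒳 → G) (hμ : StronglyMeasurable μ)
    (hμ2 : Integrable (fun ω => ‖μ (X ω)‖ ^ 2) P) :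
    (∀ g : G, ‖g‖ ≤ 1 →
        (∫ ω, ((P[(fun ω' => ⟪g, ψ (Y ω')⟫) | MeasurableSpace.comap X inferInstance]) ω
              - ⟪g, μ (X ω)⟫) ^ 2 ∂P)
          ≤ ∫ ω, ‖ψ (Y ω) - μ (X ω)‖ ^ 2 ∂P) ∧
    sSup {r : ℝ | ∃ g : G, ‖g‖ ≤ 1 ∧
          r = ∫ ω, ((P[(fun ω' => ⟪g, ψ (Y ω')⟫) | MeasurableSpace.comap X inferInstance]) ω
                - ⟪g, μ (X ω)⟫) ^ 2 ∂P}
      ≤ ∫ ω, ‖ψ (Y ω) - μ (X ω)‖ ^ 2 ∂P := by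
  have hψY : MemLp (fun ω => ψ (Y ω)) 2 P :=
    (memLp_two_iff_integrable_sq_norm (hψ.comp_measurable hY).aestronglyMeasurable).2 hψ2
  have hμX : MemLp (fun ω => μ (X ω)) 2 P :=
    (memLp_two_iff_integrable_sq_norm (hμ.comp_measurable hX).aestronglyMeasurable).2 hμ2
  have hbound : ∀ g : G, ‖g‖ ≤ 1 →
      ∫ ω, ((P[(fun ω' => ⟪g, ψ (Y ω')⟫) | MeasurableSpace.comap X inferInstance]) ω
        - ⟪g, μ (X ω)⟫) ^ 2 ∂P ≤ ∫ ω, ‖ψ (Y ω) - μ (X ω)‖ ^ 2 ∂P := fun g hg =>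
    integral_sq_condExp_inner_sub_le hX.comap_le hψY hμX
      (hμ.comp_measurable (comap_measurable X)) hg
  refine ⟨hbound, Real.sSup_le ?_ (integral_nonneg fun ω => sq_nonneg _)⟩
  rintro r ⟨g, hg, rfl⟩
  exact hbound g hg

/-- **Surrogate loss bound for the conditional mean embedding:** for every
measurable `μ : 𝒳 → G` with `E‖μ(X)‖² < ∞` and every `g` with `‖g‖ ≤ 1`,
`E[(E[⟪g, ψ(Y)⟫ | σ(X)] − ⟪g, μ(X)⟫)²] ≤ E‖ψ(Y) − μ(X)‖²`; consequently the
natural risk `sup_{‖g‖≤1} E[(E[⟪g,ψ(Y)⟫|σ(X)] − ⟪g, μ(X)⟫)²]` is bounded by the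
surrogate risk `E‖ψ(Y) − μ(X)‖²`. -/
theorem conditional_mean_embedding_surrogate_bound
    {Ω : Type*} [MeasurableSpace Ω]
    {𝒳 : Type*} [MeasurableSpace 𝒳] {𝒴 : Type*} [MeasurableSpace 𝒴]
    {G : Type*} [NormedAddCommGroup G] [InnerProductSpace ℝ G] [CompleteSpace G]
    (P : Measure Ω) [IsProbabilityMeasure P]
    (X : Ω → 𝒳) (Y : Ω → 𝒴) (hX : Measurable X) (hY : Measurable Y)
    (ψ : 𝒴 → G) (hψ : StronglyMeasurable ψ)
    (hψ2 : Integrable (fun ω => ‖ψ (Y ω)‖ ^ 2) P)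
    (μ : 𝒳 → G) (hμ : StronglyMeasurable μ)
    (hμ2 : Integrable (fun ω => ‖μ (X ω)‖ ^ 2) P) :
    (∀ g : G, ‖g‖ ≤ 1 →
        (∫ ω, ((P[(fun ω' => ⟪g, ψ (Y ω')⟫) | MeasurableSpace.comap X inferInstance]) ω
              - ⟪g, μ (X ω)⟫) ^ 2 ∂P)
          ≤ ∫ ω, ‖ψ (Y ω) - μ (X ω)‖ ^ 2 ∂P) ∧
    sSup {r : ℝ | ∃ g : G, ‖g‖ ≤ 1 ∧
          r = ∫ ω, ((P[(fun ω' => ⟪g, ψ (Y ω')⟫) | MeasurableSpace.comap X inferInstance]) ω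
                - ⟪g, μ (X ω)⟫) ^ 2 ∂P}
      ≤ ∫ ω, ‖ψ (Y ω) - μ (X ω)‖ ^ 2 ∂P :=
  conditional_mean_embedding_surrogate_bound_general P X Y hX hY ψ hψ hψ2 μ hμ hμ2
end

section
/- HSIC as squared MMD between the joint and the product of marginals: ‖ ∫ Φ dP − ∫ Φ d(P_X ⊗ P_Y) ‖²_F = ∫∫ k(x,x') l(y,y') d(P ⊗ P)((x,y),(x',y')) + ( ∫∫ k(x,x') d(P_X ⊗ P_X) ) · ( ∫∫ l(y,y') d(P_Y ⊗ P_Y) ) − 2 ∫∫∫ k(x,x'') l(y,y'') dP(x,y) dP_X(x'') dP_Y(y''). -/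
/-!
Expanding the square, each inner product `⟪∫ Φ ∂μ, ∫ Φ ∂ν⟫` of kernel mean embeddings is the
integral of `⟪Φ z, Φ z'⟫ = k(x, x') l(y, y')` over `μ ⊗ ν` (Fubini for the bilinear map `⟪·, ·⟫`).
In the term where both measures are `P_X ⊗ P_Y`, regrouping `((x, y), (x', y'))` as
`((x, x'), (y, y'))` carries `(P_X ⊗ P_Y) ⊗ (P_X ⊗ P_Y)` to `(P_X ⊗ P_X) ⊗ (P_Y ⊗ P_Y)`, where the
integral of `k(x, x') l(y, y')` splits into the product of the two kernel integrals. This splitting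
needs no integrability of `k` or `l` separately.
-/

open MeasureTheory
open scoped RealInnerProductSpace

namespace MeasurableEquiv

def prodProdProdComm (α β γ δ : Type*) [MeasurableSpace α] [MeasurableSpace β]
    [MeasurableSpace γ] [MeasurableSpace δ] : (α × β) × γ × δ ≃ᵐ (α × γ) × β × δ where
  toEquiv := Equiv.prodProdProdComm α β γ δ
  measurable_toFun := by dsimp [Equiv.prodProdProdComm]; fun_prop
  measurable_invFun := by dsimp [Equiv.prodProdProdComm]; fun_prop

end MeasurableEquiv

namespace MeasureTheory

variable {α β γ δ : Type*} [MeasurableSpace α] [MeasurableSpace β]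
  [MeasurableSpace γ] [MeasurableSpace δ]

theorem measurePreserving_prodProdProdComm (μa : Measure α) (μb : Measure β) (μc : Measure γ)
    (μd : Measure δ) [SFinite μa] [SFinite μb] [SFinite μc] [SFinite μd] :
    MeasurePreserving (MeasurableEquiv.prodProdProdComm α β γ δ)
      ((μa.prod μb).prod (μc.prod μd)) ((μa.prod μc).prod (μb.prod μd)) :=
  -- `((a, b), c, d) ↦ (a, b, c, d) ↦ (a, (b, c), d) ↦ (a, (c, b), d) ↦ (a, c, b, d) ↦ ((a, c), b, d)`
  (measurePreserving_prodAssoc μa μc (μb.prod μd)).symm.comp <|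
    ((MeasurePreserving.id μa).prod <|
      (measurePreserving_prodAssoc μc μb μd).comp <|
        (Measure.measurePreserving_swap.prod (MeasurePreserving.id μd)).comp
          (measurePreserving_prodAssoc μb μc μd).symm).comp
      (measurePreserving_prodAssoc μa μb (μc.prod μd))

theorem integral_prod_prod_mul {L : Type*} [RCLike L] {μa : Measure α} {μb : Measure β}
    {μc : Measure γ} {μd : Measure δ} [SFinite μa] [SFinite μb] [SFinite μc] [SFinite μd]
    (f : α × γ → L) (g : β × δ → L) :
    ∫ z, f (z.1.1, z.2.1) * g (z.1.2, z.2.2) ∂(μa.prod μb).prod (μc.prod μd)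
      = (∫ p, f p ∂μa.prod μc) * ∫ q, g q ∂μb.prod μd := by
  rw [← integral_prod_mul f g]
  exact (measurePreserving_prodProdProdComm μa μb μc μd).integral_comp'
    (f := MeasurableEquiv.prodProdProdComm α β γ δ) (fun z => f z.1 * g z.2)

theorem integral_prod_inner {E : Type*} [NormedAddCommGroup E] [InnerProductSpace ℝ E]
    [CompleteSpace E] {μ : Measure α} {ν : Measure β} [SFinite μ] [SFinite ν]
    {f : α → E} {g : β → E} (hf : Integrable f μ) (hg : Integrable g ν) :
    ∫ z, ⟪f z.1, g z.2⟫ ∂μ.prod ν = ⟪∫ x, f x ∂μ, ∫ y, g y ∂ν⟫ :=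
  integral_prod_bilin (innerSL ℝ) hf hg

end MeasureTheory

theorem hsic_eq_sq_mmd_expansion_general
    {𝒳 : Type*} [MeasurableSpace 𝒳] {𝒴 : Type*} [MeasurableSpace 𝒴]
    {H : Type*} [NormedAddCommGroup H] [InnerProductSpace ℝ H]
    {G : Type*} [NormedAddCommGroup G] [InnerProductSpace ℝ G]
    {F : Type*} [NormedAddCommGroup F] [InnerProductSpace ℝ F] [CompleteSpace F]
    (φ : 𝒳 → H) (ψ : 𝒴 → G) (Φ : 𝒳 × 𝒴 → F)
    (hprod : ∀ x y x' y', ⟪Φ (x, y), Φ (x', y')⟫ = ⟪φ x, φ x'⟫ * ⟪ψ y, ψ y'⟫)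
    (P : Measure (𝒳 × 𝒴)) [IsProbabilityMeasure P]
    (hΦP : Integrable Φ P)
    (hΦind : Integrable Φ ((P.map Prod.fst).prod (P.map Prod.snd))) :
    ‖(∫ z, Φ z ∂P) - ∫ z, Φ z ∂((P.map Prod.fst).prod (P.map Prod.snd))‖ ^ 2
      = (∫ p, ⟪φ p.1.1, φ p.2.1⟫ * ⟪ψ p.1.2, ψ p.2.2⟫ ∂(P.prod P))
        + (∫ q, ⟪φ q.1, φ q.2⟫ ∂((P.map Prod.fst).prod (P.map Prod.fst)))
          * (∫ r, ⟪ψ r.1, ψ r.2⟫ ∂((P.map Prod.snd).prod (P.map Prod.snd)))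
        - 2 * ∫ s, ⟪φ s.1.1, φ s.2.1⟫ * ⟪ψ s.1.2, ψ s.2.2⟫
              ∂(P.prod ((P.map Prod.fst).prod (P.map Prod.snd))) := by
  have := Measure.isProbabilityMeasure_map (μ := P) measurable_fst.aemeasurable
  have := Measure.isProbabilityMeasure_map (μ := P) measurable_snd.aemeasurable
  have hkernel : ∀ z : (𝒳 × 𝒴) × 𝒳 × 𝒴,
      ⟪Φ z.1, Φ z.2⟫ = ⟪φ z.1.1, φ z.2.1⟫ * ⟪ψ z.1.2, ψ z.2.2⟫ :=
    fun z => hprod z.1.1 z.1.2 z.2.1 z.2.2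
  rw [norm_sub_sq_real, ← real_inner_self_eq_norm_sq, ← real_inner_self_eq_norm_sq,
    ← integral_prod_inner hΦP hΦP, ← integral_prod_inner hΦP hΦind,
    ← integral_prod_inner hΦind hΦind]
  simp only [hkernel]
  rw [integral_prod_prod_mul (fun q => ⟪φ q.1, φ q.2⟫) (fun r => ⟪ψ r.1, ψ r.2⟫)]
  ring

/-- **HSIC as the squared MMD between the joint distribution and the product of the
marginals:** with product-kernel feature map `Φ` satisfying
`⟪Φ(x,y), Φ(x',y')⟫ = k(x,x') l(y,y')`,
`‖∫ Φ dP − ∫ Φ d(P_X ⊗ P_Y)‖² = ∫∫ k·l d(P⊗P) + (∫∫ k d(P_X⊗P_X))(∫∫ l d(P_Y⊗P_Y))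
  − 2 ∫∫∫ k(x,x'') l(y,y'') dP(x,y) dP_X(x'') dP_Y(y'')`. -/
theorem hsic_eq_sq_mmd_expansion
    {𝒳 : Type*} [MeasurableSpace 𝒳] {𝒴 : Type*} [MeasurableSpace 𝒴]
    {H : Type*} [NormedAddCommGroup H] [InnerProductSpace ℝ H]
    {G : Type*} [NormedAddCommGroup G] [InnerProductSpace ℝ G]
    {F : Type*} [NormedAddCommGroup F] [InnerProductSpace ℝ F] [CompleteSpace F]
    (φ : 𝒳 → H) (ψ : 𝒴 → G) (Φ : 𝒳 × 𝒴 → F)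
    (hφ : StronglyMeasurable φ) (hψ : StronglyMeasurable ψ) (hΦ : StronglyMeasurable Φ)
    (hprod : ∀ x y x' y', ⟪Φ (x, y), Φ (x', y')⟫ = ⟪φ x, φ x'⟫ * ⟪ψ y, ψ y'⟫)
    (P : Measure (𝒳 × 𝒴)) [IsProbabilityMeasure P]
    (hΦP : Integrable Φ P)
    (hΦind : Integrable Φ ((P.map Prod.fst).prod (P.map Prod.snd))) :
    ‖(∫ z, Φ z ∂P) - ∫ z, Φ z ∂((P.map Prod.fst).prod (P.map Prod.snd))‖ ^ 2
      = (∫ p, ⟪φ p.1.1, φ p.2.1⟫ * ⟪ψ p.1.2, ψ p.2.2⟫ ∂(P.prod P))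
        + (∫ q, ⟪φ q.1, φ q.2⟫ ∂((P.map Prod.fst).prod (P.map Prod.fst)))
          * (∫ r, ⟪ψ r.1, ψ r.2⟫ ∂((P.map Prod.snd).prod (P.map Prod.snd)))
        - 2 * ∫ s, ⟪φ s.1.1, φ s.2.1⟫ * ⟪ψ s.1.2, ψ s.2.2⟫
              ∂(P.prod ((P.map Prod.fst).prod (P.map Prod.snd))) :=
  hsic_eq_sq_mmd_expansion_general φ ψ Φ hprod P hΦP hΦind
end

section
/- Energy distance equals the squared MMD of the induced distance kernel: defining k(z, z') := ρ(z, z₀) + ρ(z', z₀) − ρ(z, z'), one has ∫∫ k d(P ⊗ P) + ∫∫ k d(Q ⊗ Q) − 2 ∫∫ k d(P ⊗ Q) = 2 ∫∫ ρ d(P ⊗ Q) − ∫∫ ρ d(P ⊗ P) − ∫∫ ρ d(Q ⊗ Q); in particular the right-hand side (the energy distance D_E(P, Q) generalized to the semi-metric ρ) does not depend on the base point z₀. -/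
open MeasureTheory
open scoped RealInnerProductSpace

lemma mp_fst {𝒵 : Type*} [MeasurableSpace 𝒵] (μ ν : Measure 𝒵)
    [IsProbabilityMeasure ν] [SFinite μ] [SFinite ν] :
    MeasurePreserving Prod.fst (μ.prod ν) μ :=
  ⟨measurable_fst, by simp [Measure.map_fst_prod]⟩

lemma mp_snd {𝒵 : Type*} [MeasurableSpace 𝒵] (μ ν : Measure 𝒵)
    [IsProbabilityMeasure μ] [SFinite μ] [SFinite ν] :
    MeasurePreserving Prod.snd (μ.prod ν) ν :=
  ⟨measurable_snd, by simp [Measure.map_snd_prod]⟩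

lemma key {𝒵 : Type*} [MeasurableSpace 𝒵]
    (ρ : 𝒵 → 𝒵 → ℝ) (hmeas : Measurable (Function.uncurry ρ))
    (z₀ : 𝒵) (μ ν : Measure 𝒵) [IsProbabilityMeasure μ] [IsProbabilityMeasure ν]
    (hμν : Integrable (fun p : 𝒵 × 𝒵 => ρ p.1 p.2) (μ.prod ν))
    (hμ0 : Integrable (fun z => ρ z z₀) μ) (hν0 : Integrable (fun z => ρ z z₀) ν)
    (k : 𝒵 → 𝒵 → ℝ) (hk : ∀ z z', k z z' = ρ z z₀ + ρ z' z₀ - ρ z z') :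
    ∫ p, k p.1 p.2 ∂(μ.prod ν)
      = (∫ z, ρ z z₀ ∂μ) + (∫ z, ρ z z₀ ∂ν) - ∫ p, ρ p.1 p.2 ∂(μ.prod ν) := by
  have h1 : Integrable (fun p : 𝒵 × 𝒵 => ρ p.1 z₀) (μ.prod ν) :=
    ((mp_fst μ ν).integrable_comp hμ0.1).2 hμ0
  have h2 : Integrable (fun p : 𝒵 × 𝒵 => ρ p.2 z₀) (μ.prod ν) :=
    ((mp_snd μ ν).integrable_comp hν0.1).2 hν0
  have e1 : ∫ p : 𝒵 × 𝒵, ρ p.1 z₀ ∂(μ.prod ν) = ∫ z, ρ z z₀ ∂μ := by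
    rw [MeasureTheory.integral_fun_fst (f := fun z => ρ z z₀)]; simp
  have e2 : ∫ p : 𝒵 × 𝒵, ρ p.2 z₀ ∂(μ.prod ν) = ∫ z, ρ z z₀ ∂ν := by
    rw [MeasureTheory.integral_fun_snd (f := fun z => ρ z z₀)]; simp
  calc ∫ p, k p.1 p.2 ∂(μ.prod ν)
      = ∫ p : 𝒵 × 𝒵, (ρ p.1 z₀ + ρ p.2 z₀ - ρ p.1 p.2) ∂(μ.prod ν) := by
        simp only [hk]
    _ = (∫ p : 𝒵 × 𝒵, ρ p.1 z₀ ∂(μ.prod ν)) + (∫ p : 𝒵 × 𝒵, ρ p.2 z₀ ∂(μ.prod ν))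
        - ∫ p, ρ p.1 p.2 ∂(μ.prod ν) := by
        have hs := integral_sub (h1.add h2) hμν
        have ha := integral_add h1 h2
        simp only [Pi.add_apply] at hs ha
        rw [hs, ha]
    _ = _ := by rw [e1, e2]

/-- **Energy distance equals the squared MMD of the induced distance kernel:** for
`k(z, z') = ρ(z, z₀) + ρ(z', z₀) − ρ(z, z')`,
`∫∫ k d(P⊗P) + ∫∫ k d(Q⊗Q) − 2 ∫∫ k d(P⊗Q)
  = 2 ∫∫ ρ d(P⊗Q) − ∫∫ ρ d(P⊗P) − ∫∫ ρ d(Q⊗Q)`;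
in particular the right-hand side (the generalized energy distance) does not depend
on the base point `z₀`. -/
theorem energy_distance_eq_sq_mmd_distance_kernel
    {𝒵 : Type*} [MeasurableSpace 𝒵]
    (ρ : 𝒵 → 𝒵 → ℝ) (hmeas : Measurable (Function.uncurry ρ))
    (hsymm : ∀ z z', ρ z z' = ρ z' z)
    (z₀ : 𝒵) (P Q : Measure 𝒵) [IsProbabilityMeasure P] [IsProbabilityMeasure Q]
    (hPP : Integrable (fun p : 𝒵 × 𝒵 => ρ p.1 p.2) (P.prod P))
    (hQQ : Integrable (fun p : 𝒵 × 𝒵 => ρ p.1 p.2) (Q.prod Q))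
    (hPQ : Integrable (fun p : 𝒵 × 𝒵 => ρ p.1 p.2) (P.prod Q))
    (hP0 : Integrable (fun z => ρ z z₀) P) (hQ0 : Integrable (fun z => ρ z z₀) Q)
    (k : 𝒵 → 𝒵 → ℝ) (hk : ∀ z z', k z z' = ρ z z₀ + ρ z' z₀ - ρ z z') :
    (∫ p, k p.1 p.2 ∂(P.prod P)) + (∫ p, k p.1 p.2 ∂(Q.prod Q))
        - 2 * ∫ p, k p.1 p.2 ∂(P.prod Q)
      = 2 * (∫ p, ρ p.1 p.2 ∂(P.prod Q)) - (∫ p, ρ p.1 p.2 ∂(P.prod P))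
        - ∫ p, ρ p.1 p.2 ∂(Q.prod Q) := by
  rw [key ρ hmeas z₀ P P hPP hP0 hP0 k hk,
      key ρ hmeas z₀ Q Q hQQ hQ0 hQ0 k hk,
      key ρ hmeas z₀ P Q hPQ hP0 hQ0 k hk]
  ring
end

section
/- The L² distance between kernel density estimates is an instance of the MMD: for points x_1, …, x_n and y_1, …, y_m in ℝ^d, ∫_{ℝ^d} ( (1/n) Σ_{i=1}^n κ(x_i − z) − (1/m) Σ_{j=1}^m κ(y_j − z) )² dz = (1/n²) Σ_{i,j} k(x_i, x_j) + (1/m²) Σ_{i,j} k(y_i, y_j) − (2/(nm)) Σ_{i,j} k(x_i, y_j), where k(x, y) := ∫_{ℝ^d} κ(x − z) κ(y − z) dz. -/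
/-!
Expanding the square turns the integrand into a finite combination of products
`κ (a - z) * κ (b - z)`. Translates of the reflected kernel stay in `L²`, so by Cauchy–Schwarz
each product is integrable, and the integral can be taken term by term; each term is `k a b`.
-/

open MeasureTheory

section L2Expansion

variable {α : Type*} [MeasurableSpace α] {μ : Measure α}

theorem integral_sum_mul_sum_of_memLp_two {ι ι' : Type*} [Fintype ι] [Fintype ι']
    {f : ι → α → ℝ} {g : ι' → α → ℝ} (hf : ∀ i, MemLp (f i) 2 μ) (hg : ∀ j, MemLp (g j) 2 μ) :
    ∫ z, (∑ i, f i z) * (∑ j, g j z) ∂μ = ∑ i, ∑ j, ∫ z, f i z * g j z ∂μ := by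
  have hfg : ∀ i j, Integrable (fun z => f i z * g j z) μ := fun i j =>
    (hf i).integrable_mul (hg j)
  simp_rw [Finset.sum_mul_sum]
  rw [integral_finsetSum _ fun i _ => integrable_finsetSum _ fun j _ => hfg i j]
  exact Finset.sum_congr rfl fun i _ => integral_finsetSum _ fun j _ => hfg i j

theorem integral_mul_sub_mul_sq_of_memLp_two {f g : α → ℝ}
    (hf : MemLp f 2 μ) (hg : MemLp g 2 μ) (a b : ℝ) :
    ∫ z, (a * f z - b * g z) ^ 2 ∂μ
      = a ^ 2 * ∫ z, f z * f z ∂μ + b ^ 2 * ∫ z, g z * g z ∂μ - 2 * a * b * ∫ z, f z * g z ∂μ := by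
  have hff : Integrable (fun z => f z * f z) μ := hf.integrable_mul hf
  have hgg : Integrable (fun z => g z * g z) μ := hg.integrable_mul hg
  have hfg : Integrable (fun z => f z * g z) μ := hf.integrable_mul hg
  calc ∫ z, (a * f z - b * g z) ^ 2 ∂μ
      = ∫ z, a ^ 2 * (f z * f z) + b ^ 2 * (g z * g z) - 2 * a * b * (f z * g z) ∂μ := by
        congr 1 with z; ring
    _ = _ := by
        rw [integral_sub, integral_add, integral_const_mul, integral_const_mul, integral_const_mul]
        exacts [hff.const_mul _, hgg.const_mul _, (hff.const_mul _).add (hgg.const_mul _),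
          hfg.const_mul _]

end L2Expansion

theorem MeasureTheory.MemLp.comp_sub_left {G E : Type*} [MeasurableSpace G] [AddGroup G]
    [MeasurableAdd G] [MeasurableNeg G] [NormedAddCommGroup E] {μ : Measure G}
    [μ.IsNegInvariant] [μ.IsAddLeftInvariant] {p : ENNReal} {f : G → E} (hf : MemLp f p μ)
    (a : G) : MemLp (fun z => f (a - z)) p μ :=
  hf.comp_measurePreserving (Measure.measurePreserving_sub_left μ a)

theorem L2_dist_kde_eq_mmd_general
    {d : ℕ} (κ : EuclideanSpace ℝ (Fin d) → ℝ)
    (hκ2 : MemLp κ 2 (volume : Measure (EuclideanSpace ℝ (Fin d))))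
    (n m : ℕ)
    (x : Fin n → EuclideanSpace ℝ (Fin d)) (y : Fin m → EuclideanSpace ℝ (Fin d))
    (k : EuclideanSpace ℝ (Fin d) → EuclideanSpace ℝ (Fin d) → ℝ)
    (hk : ∀ a b, k a b = ∫ z, κ (a - z) * κ (b - z)) :
    (∫ z, ((n : ℝ)⁻¹ * (∑ i, κ (x i - z)) - (m : ℝ)⁻¹ * ∑ j, κ (y j - z)) ^ 2)
      = ((n : ℝ) ^ 2)⁻¹ * (∑ i, ∑ j, k (x i) (x j))
        + ((m : ℝ) ^ 2)⁻¹ * (∑ i, ∑ j, k (y i) (y j))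
        - 2 / ((n : ℝ) * m) * ∑ i, ∑ j, k (x i) (y j) := by
  have hκx : ∀ i, MemLp (fun z => κ (x i - z)) 2 volume := fun i => hκ2.comp_sub_left (x i)
  have hκy : ∀ j, MemLp (fun z => κ (y j - z)) 2 volume := fun j => hκ2.comp_sub_left (y j)
  rw [integral_mul_sub_mul_sq_of_memLp_two (memLp_finsetSum _ fun i _ => hκx i)
      (memLp_finsetSum _ fun j _ => hκy j),
    integral_sum_mul_sum_of_memLp_two hκx hκx, integral_sum_mul_sum_of_memLp_two hκy hκy,
    integral_sum_mul_sum_of_memLp_two hκx hκy]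
  simp only [← hk]
  ring

/-- **The `L²` distance between kernel density estimates is an instance of the
MMD:** for samples `x₁, …, xₙ` and `y₁, …, y_m` in `ℝ^d`,
`∫ ((1/n) Σᵢ κ(xᵢ − z) − (1/m) Σⱼ κ(yⱼ − z))² dz
  = (1/n²) Σᵢⱼ k(xᵢ, xⱼ) + (1/m²) Σᵢⱼ k(yᵢ, yⱼ) − (2/(nm)) Σᵢⱼ k(xᵢ, yⱼ)`,
where `k(x, y) = ∫ κ(x − z) κ(y − z) dz`. -/
theorem L2_dist_kde_eq_mmd
    {d : ℕ} (κ : EuclideanSpace ℝ (Fin d) → ℝ)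
    (hκm : Measurable κ) (hκ2 : MemLp κ 2 (volume : Measure (EuclideanSpace ℝ (Fin d))))
    (n m : ℕ)
    (x : Fin n → EuclideanSpace ℝ (Fin d)) (y : Fin m → EuclideanSpace ℝ (Fin d))
    (k : EuclideanSpace ℝ (Fin d) → EuclideanSpace ℝ (Fin d) → ℝ)
    (hk : ∀ a b, k a b = ∫ z, κ (a - z) * κ (b - z)) :
    (∫ z, ((n : ℝ)⁻¹ * (∑ i, κ (x i - z)) - (m : ℝ)⁻¹ * ∑ j, κ (y j - z)) ^ 2)
      = ((n : ℝ) ^ 2)⁻¹ * (∑ i, ∑ j, k (x i) (x j))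
        + ((m : ℝ) ^ 2)⁻¹ * (∑ i, ∑ j, k (y i) (y j))
        - 2 / ((n : ℝ) * m) * ∑ i, ∑ j, k (x i) (y j) :=
  L2_dist_kde_eq_mmd_general κ hκ2 n m x y k hk
end

section
/- Representer theorem for distributional risk minimization: let H be a real Hilbert space, m_1, …, m_n ∈ H, ℓ : ℝⁿ → ℝ an arbitrary function, and Ω : [0, ∞) → ℝ a strictly monotonically increasing function. If f̂ ∈ H minimizes the functional J(f) := ℓ(⟨f, m_1⟩, …, ⟨f, m_n⟩) + Ω(‖f‖_H) over H, then f̂ lies in the linear span of {m_1, …, m_n}, i.e. f̂ = Σ_{i=1}^n α_i m_i for some α ∈ ℝⁿ. -/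
open scoped RealInnerProductSpace

namespace Submodule

variable {H : Type*} [NormedAddCommGroup H] [InnerProductSpace ℝ H]
  (K : Submodule ℝ H) [K.HasOrthogonalProjection]

theorem norm_starProjection_lt_of_notMem {v : H} (hv : v ∉ K) :
    ‖K.starProjection v‖ < ‖v‖ :=
  (K.norm_starProjection_apply_le v).lt_of_ne fun h => hv ((K.mem_iff_norm_starProjection v).2 h)

theorem inner_starProjection_of_mem_right (v : H) {w : H} (hw : w ∈ K) :
    ⟪K.starProjection v, w⟫ = ⟪v, w⟫ := by
  rw [inner_starProjection_left_eq_right, starProjection_eq_self_iff.2 hw]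

/-- Projecting onto `K` leaves the loss unchanged and, off `K`, strictly lowers the penalty. -/
theorem mem_of_forall_le_add_strictMonoOn_norm {L : H → ℝ}
    (hL : ∀ f, L (K.starProjection f) = L f) {Ω : ℝ → ℝ} (hΩ : StrictMonoOn Ω (Set.Ici 0))
    {fhat : H} (hmin : ∀ f, L fhat + Ω ‖fhat‖ ≤ L f + Ω ‖f‖) : fhat ∈ K := by
  by_contra hfhat
  have hJ := hmin (K.starProjection fhat)
  have hpenalty : Ω ‖K.starProjection fhat‖ < Ω ‖fhat‖ :=
    hΩ (norm_nonneg _) (norm_nonneg _) (K.norm_starProjection_lt_of_notMem hfhat)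
  rw [hL] at hJ
  linarith

end Submodule

theorem representer_theorem_distributional_risk_general
    {H : Type*} [NormedAddCommGroup H] [InnerProductSpace ℝ H]
    (n : ℕ) (m : Fin n → H) (ℓ : (Fin n → ℝ) → ℝ)
    (Ω : ℝ → ℝ) (hΩ : StrictMonoOn Ω (Set.Ici 0))
    (fhat : H)
    (hmin : ∀ f : H,
      ℓ (fun i => ⟪fhat, m i⟫) + Ω ‖fhat‖ ≤ ℓ (fun i => ⟪f, m i⟫) + Ω ‖f‖) :
    ∃ α : Fin n → ℝ, fhat = ∑ i, α i • m i := by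
  let V := Submodule.span ℝ (Set.range m)
  have : FiniteDimensional ℝ V := FiniteDimensional.span_of_finite ℝ (Set.finite_range m)
  have hmem : fhat ∈ V := by
    refine V.mem_of_forall_le_add_strictMonoOn_norm (L := fun f => ℓ fun i => ⟪f, m i⟫)
      (fun f => ?_) hΩ hmin
    simp only [V.inner_starProjection_of_mem_right f (Submodule.subset_span ⟨_, rfl⟩)]
  obtain ⟨α, hα⟩ := (Submodule.mem_span_range_iff_exists_fun ℝ).1 hmem
  exact ⟨α, hα.symm⟩

/-- **Representer theorem for distributional risk minimization:** if `fhat`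
minimizes `J(f) = ℓ(⟪f, m₁⟫, …, ⟪f, mₙ⟫) + Ω(‖f‖)` over a Hilbert space `H`,
where `Ω` is strictly monotonically increasing on `[0, ∞)`, then `fhat` lies in
the span of the mean embeddings `m₁, …, mₙ`: `fhat = Σᵢ αᵢ mᵢ`. -/
theorem representer_theorem_distributional_risk
    {H : Type*} [NormedAddCommGroup H] [InnerProductSpace ℝ H] [CompleteSpace H]
    (n : ℕ) (m : Fin n → H) (ℓ : (Fin n → ℝ) → ℝ)
    (Ω : ℝ → ℝ) (hΩ : StrictMonoOn Ω (Set.Ici 0))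
    (fhat : H)
    (hmin : ∀ f : H,
      ℓ (fun i => ⟪fhat, m i⟫) + Ω ‖fhat‖ ≤ ℓ (fun i => ⟪f, m i⟫) + Ω ‖f‖) :
    ∃ α : Fin n → ℝ, fhat = ∑ i, α i • m i :=
  representer_theorem_distributional_risk_general n m ℓ Ω hΩ fhat hmin
end
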